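/- arXiv:1201.5335 — 7 statements merged into one kernel-verified Lean document; each statement's English description precedes it below -/
import Mathlib

section
/- For every e ∈ E and every f ∈ E with f ≠ e, the mapping Y ↦ R_e(Y) takes values in (0,1] and is non-increasing in the variable Y_f when all other coordinates are held fixed. -/
open scoped Classical

/-- `R_e(Y) = (Σ_{S ⊆ E\{e}, |S| ≤ w−1} Y^S) / (Σ_{S ⊆ E\{e}, |S| ≤ w} Y^S)`,
where `Y^S = ∏_{f ∈ S} Y_f`. -/
noncomputable def Re {α : Type*} [DecidableEq α] (E : Finset α) (w : ℕ) (e : α)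
    (Y : α → ℝ) : ℝ :=
  (∑ S ∈ (E.erase e).powerset.filter (fun S => S.card ≤ w - 1), ∏ f ∈ S, Y f) /
  (∑ S ∈ (E.erase e).powerset.filter (fun S => S.card ≤ w), ∏ f ∈ S, Y f)

/-!
With `F = E \ {e}` and `Q_k = esymmPartialSum F Y k = Σ_{S ⊆ F, |S| < k} Y^S`, we have
`R_e = Q_w / Q_{w+1}`, so `0 < R_e ≤ 1` because `1 ≤ Q_w ≤ Q_{w+1}`. Splitting off `f`, with
`F' = F \ {f}` and `Q'_k` the corresponding sums over `F'`, gives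
`R_e = (Q'_w + Y_f Q'_{w-1}) / (Q'_{w+1} + Y_f Q'_w)`, a Möbius function of `Y_f` which is
non-increasing exactly when `Q'_{w-1} Q'_{w+1} ≤ Q'_w ^ 2`. This log-concavity of `k ↦ Q_k`
holds for every finite set of nonnegative weights, by induction on the set through the
recurrence `Q_{k+1}(F ∪ {x}) = Q_{k+1}(F) + Y_x Q_k(F)`.
-/

open Finset

section Algebra

variable {a b c d t : ℝ}

lemma mul_le_mul_of_sq_le_of_sq_le (hb : 0 < b) (hc : 0 < c) (hd : 0 ≤ d)
    (habc : a * c ≤ b ^ 2) (hbcd : b * d ≤ c ^ 2) : a * d ≤ b * c := by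
  have hbc : 0 < b * c := mul_pos hb hc
  refine le_of_mul_le_mul_right ?_ hbc
  calc a * d * (b * c) = (a * c) * (b * d) := by ring
    _ ≤ b ^ 2 * c ^ 2 := mul_le_mul habc hbcd (mul_nonneg hb.le hd) (sq_nonneg b)
    _ = b * c * (b * c) := by ring

lemma add_mul_mul_add_mul_le_sq (hb : 0 < b) (hc : 0 < c) (hd : 0 ≤ d)
    (ht : 0 ≤ t) (habc : a * c ≤ b ^ 2) (hbcd : b * d ≤ c ^ 2) :
    (b + t * a) * (d + t * c) ≤ (c + t * b) ^ 2 := by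
  have had := mul_le_mul_of_sq_le_of_sq_le hb hc hd habc hbcd
  nlinarith [mul_nonneg ht (sub_nonneg.mpr had),
    mul_nonneg (mul_nonneg ht ht) (sub_nonneg.mpr habc)]

lemma div_add_mul_antitoneOn (hb : 0 < b) (hc : 0 < c) (habc : a * c ≤ b ^ 2) :
    AntitoneOn (fun t => (b + t * a) / (c + t * b)) (Set.Ici 0) := by
  intro t₁ (ht₁ : 0 ≤ t₁) t₂ (ht₂ : 0 ≤ t₂) ht
  have h₁ : 0 < c + t₁ * b := by positivity
  have h₂ : 0 < c + t₂ * b := by positivity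
  rw [div_le_div_iff₀ h₂ h₁]
  nlinarith [mul_nonneg (sub_nonneg.mpr ht) (sub_nonneg.mpr habc)]

end Algebra

/-- The strict bound `|S| < k` makes the value at `k = 0` equal to `0`, so that the insertion
recurrence `esymmPartialSum_insert` holds for every `k`. -/
noncomputable def esymmPartialSum {α : Type*} (F : Finset α) (Y : α → ℝ) (k : ℕ) : ℝ :=
  ∑ S ∈ F.powerset.filter (fun S => S.card < k), ∏ a ∈ S, Y a

section esymmPartialSum

variable {α : Type*} {F : Finset α} {Y : α → ℝ}

lemma prod_nonneg_of_mem_filter_powerset {p : Finset α → Prop} [DecidablePred p]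
    (hY : ∀ a ∈ F, 0 ≤ Y a) {S : Finset α} (hS : S ∈ F.powerset.filter p) :
    0 ≤ ∏ a ∈ S, Y a :=
  prod_nonneg fun a ha => hY a (mem_powerset.mp (mem_filter.mp hS).1 ha)

lemma esymmPartialSum_zero : esymmPartialSum F Y 0 = 0 := by
  simp [esymmPartialSum]

lemma esymmPartialSum_nonneg (hY : ∀ a ∈ F, 0 ≤ Y a) (k : ℕ) :
    0 ≤ esymmPartialSum F Y k :=
  sum_nonneg fun _ => prod_nonneg_of_mem_filter_powerset hY

lemma esymmPartialSum_mono (hY : ∀ a ∈ F, 0 ≤ Y a) : Monotone (esymmPartialSum F Y) := by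
  intro k l hkl
  refine sum_le_sum_of_subset_of_nonneg (fun S hS => ?_) fun _ hS _ =>
    prod_nonneg_of_mem_filter_powerset hY hS
  exact mem_filter.mpr ⟨(mem_filter.mp hS).1, (mem_filter.mp hS).2.trans_le hkl⟩

lemma one_le_esymmPartialSum (hY : ∀ a ∈ F, 0 ≤ Y a) (k : ℕ) :
    1 ≤ esymmPartialSum F Y (k + 1) := by
  have hempty : ∅ ∈ F.powerset.filter (fun S => S.card < k + 1) := by simp
  calc (1 : ℝ) = ∏ a ∈ (∅ : Finset α), Y a := prod_empty.symm
    _ ≤ esymmPartialSum F Y (k + 1) :=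
      single_le_sum (fun _ => prod_nonneg_of_mem_filter_powerset hY) hempty

lemma esymmPartialSum_pos (hY : ∀ a ∈ F, 0 ≤ Y a) (k : ℕ) :
    0 < esymmPartialSum F Y (k + 1) :=
  zero_lt_one.trans_le (one_le_esymmPartialSum hY k)

lemma esymmPartialSum_congr {Z : α → ℝ} (hYZ : ∀ a ∈ F, Y a = Z a) (k : ℕ) :
    esymmPartialSum F Y k = esymmPartialSum F Z k :=
  sum_congr rfl fun _ hS => prod_congr rfl fun a ha =>
    hYZ a (mem_powerset.mp (mem_filter.mp hS).1 ha)

lemma esymmPartialSum_insert [DecidableEq α] {x : α} (hx : x ∉ F) (k : ℕ) :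
    esymmPartialSum (insert x F) Y (k + 1) =
      esymmPartialSum F Y (k + 1) + Y x * esymmPartialSum F Y k := by
  rw [esymmPartialSum, sum_filter, sum_powerset_insert hx, ← sum_filter, esymmPartialSum,
    esymmPartialSum, sum_filter, mul_sum, sum_filter]
  congr 1
  refine sum_congr rfl fun S hS => ?_
  have hxS : x ∉ S := fun h => hx (mem_powerset.mp hS h)
  simp only [card_insert_of_notMem hxS, prod_insert hxS, Nat.add_lt_add_iff_right]

lemma esymmPartialSum_insert_update [DecidableEq α] {x : α} (hx : x ∉ F) (t : ℝ) (k : ℕ) :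
    esymmPartialSum (insert x F) (Function.update Y x t) (k + 1) =
      esymmPartialSum F Y (k + 1) + t * esymmPartialSum F Y k := by
  have hYF : ∀ a ∈ F, Function.update Y x t a = Y a := fun a ha =>
    Function.update_of_ne (ne_of_mem_of_not_mem ha hx) t Y
  rw [esymmPartialSum_insert hx, Function.update_self, esymmPartialSum_congr hYF,
    esymmPartialSum_congr hYF]

lemma esymmPartialSum_mul_le_sq (hY : ∀ a ∈ F, 0 ≤ Y a) (k : ℕ) :
    esymmPartialSum F Y k * esymmPartialSum F Y (k + 2) ≤ esymmPartialSum F Y (k + 1) ^ 2 := by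
  induction F using Finset.induction_on generalizing k with
  | empty =>
    simp only [esymmPartialSum, powerset_empty, filter_singleton, card_empty]
    split_ifs <;> simp_all
  | @insert x F hx ih =>
    have hYF : ∀ a ∈ F, 0 ≤ Y a := fun a ha => hY a (mem_insert_of_mem ha)
    have hYx : 0 ≤ Y x := hY x (mem_insert_self x F)
    cases k with
    | zero => rw [esymmPartialSum_zero, zero_mul]; positivity
    | succ k =>
      rw [esymmPartialSum_insert hx, esymmPartialSum_insert hx, esymmPartialSum_insert hx]
      exact add_mul_mul_add_mul_le_sq (esymmPartialSum_pos hYF k)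
        (esymmPartialSum_pos hYF (k + 1)) (esymmPartialSum_nonneg hYF _) hYx
        (ih hYF k) (ih hYF (k + 1))

end esymmPartialSum

lemma Re_eq_div_esymmPartialSum {α : Type*} [DecidableEq α] (E : Finset α) (k : ℕ) (e : α)
    (Y : α → ℝ) : Re E (k + 1) e Y =
      esymmPartialSum (E.erase e) Y (k + 1) / esymmPartialSum (E.erase e) Y (k + 2) := by
  simp only [Re, esymmPartialSum, Nat.lt_succ_iff, Nat.add_sub_cancel]

theorem statement_4_general {α : Type*} [DecidableEq α] (E : Finset α) (w : ℕ) (hw : 1 ≤ w)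
    (e f : α) (hf : f ∈ E) (hfe : f ≠ e)
    (Y : α → ℝ) (hY : ∀ a ∈ E, 0 ≤ Y a) :
    (0 < Re E w e Y ∧ Re E w e Y ≤ 1) ∧
    (∀ t₁ t₂ : ℝ, 0 ≤ t₁ → t₁ ≤ t₂ →
      Re E w e (Function.update Y f t₂) ≤ Re E w e (Function.update Y f t₁)) := by
  obtain ⟨k, rfl⟩ := Nat.exists_eq_add_of_le' hw
  have hYe : ∀ a ∈ E.erase e, 0 ≤ Y a := fun a ha => hY a (mem_of_mem_erase ha)
  refine ⟨?_, fun t₁ t₂ ht₁ ht => ?_⟩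
  · have hden := esymmPartialSum_pos hYe (k + 1)
    rw [Re_eq_div_esymmPartialSum]
    exact ⟨div_pos (esymmPartialSum_pos hYe k) hden,
      (div_le_one hden).mpr (esymmPartialSum_mono hYe (k + 1).le_succ)⟩
  · set F := (E.erase e).erase f
    have hfF : f ∉ F := notMem_erase f _
    have hEF : E.erase e = insert f F := (insert_erase (mem_erase.mpr ⟨hfe, hf⟩)).symm
    have hYF : ∀ a ∈ F, 0 ≤ Y a := fun a ha => hYe a (mem_of_mem_erase ha)
    simp only [Re_eq_div_esymmPartialSum, hEF, esymmPartialSum_insert_update hfF]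
    exact div_add_mul_antitoneOn (esymmPartialSum_pos hYF k) (esymmPartialSum_pos hYF (k + 1))
      (esymmPartialSum_mul_le_sq hYF k) ht₁ (ht₁.trans ht) ht

/-- For `e ∈ E` and `f ∈ E` with `f ≠ e`, `R_e` takes values in `(0,1]` and is
non-increasing in the variable `Y_f` (the other coordinates being held fixed). -/
theorem statement_4 {α : Type*} [DecidableEq α] (E : Finset α) (w : ℕ) (hw : 1 ≤ w)
    (e f : α) (he : e ∈ E) (hf : f ∈ E) (hfe : f ≠ e)
    (Y : α → ℝ) (hY : ∀ a ∈ E, 0 ≤ Y a) :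
    (0 < Re E w e Y ∧ Re E w e Y ≤ 1) ∧
    (∀ t₁ t₂ : ℝ, 0 ≤ t₁ → t₁ ≤ t₂ →
      Re E w e (Function.update Y f t₂) ≤ Re E w e (Function.update Y f t₁)) :=
  statement_4_general E w hw e f hf hfe Y hY
end

section
/- Let E be a finite set, Y = (Y_e)_{e∈E} ∈ [0,∞)^E and e ∈ E. For j ≥ 0 set σ_j = Σ_{S ⊆ E, |S| = j} Y^S and τ_j = Σ_{S ⊆ E\{e}, |S| = j} Y^S, with τ_{−1} = 0. Then for every integer k ≥ 1, τ_{k−1}·σ_{k−1} ≥ τ_{k−2}·σ_k. Equivalently, if B_f (f ∈ E) are independent Bernoulli random variables with P(B_f = 1) = Y_f/(1+Y_f), then k ↦ P(B_e = 1 | Σ_{f∈E} B_f = k) is non-decreasing on the set of k with P(Σ_{f∈E} B_f = k) > 0. -/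
open scoped Classical

/-- `σ_j = Σ_{S ⊆ E, |S| = j} Y^S`. -/
noncomputable def sigmaSum {α : Type*} [DecidableEq α] (E : Finset α) (Y : α → ℝ)
    (j : ℕ) : ℝ :=
  ∑ S ∈ E.powerset.filter (fun S => S.card = j), ∏ f ∈ S, Y f

/-- `τ_j = Σ_{S ⊆ E\{e}, |S| = j} Y^S`. -/
noncomputable def tauSum {α : Type*} [DecidableEq α] (E : Finset α) (e : α) (Y : α → ℝ)
    (j : ℕ) : ℝ :=
  ∑ S ∈ (E.erase e).powerset.filter (fun S => S.card = j), ∏ f ∈ S, Y f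

/-!
With `F = E \ {e}` and `y = Y e` we have `σ_j = τ_j + y τ_{j-1}`, so the `y`-terms cancel and
the inequality reduces to Newton's inequality `τ_{k-2} τ_k ≤ τ_{k-1}²` for the elementary
symmetric sums of `F`. That in turn follows by induction on `F`, since multiplying the generating
polynomial by `1 + y X` with `y ≥ 0` preserves the two-index log-concavity
`a_{i-1} a_{j+1} ≤ a_i a_j` (`i ≤ j`).
-/

section LogConcave

variable {R : Type*} [CommRing R] [PartialOrder R]

/-- For nonnegative sequences without internal zeros this is ordinary log-concavity; the two-index
form is the one that is preserved by `IsLogConcave.add_mul_shift`. -/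
def IsLogConcave (a : ℤ → R) : Prop :=
  ∀ i j, i ≤ j → a (i - 1) * a (j + 1) ≤ a i * a j

namespace IsLogConcave

variable {a : ℤ → R}

theorem sub_two_mul_add_one_le (h : IsLogConcave a) {i j : ℤ} (hij : i ≤ j) :
    a (i - 2) * a (j + 1) ≤ a i * a (j - 1) := by
  rcases hij.eq_or_lt with rfl | hlt
  · simpa [sub_sub, mul_comm (a i)] using h (i - 1) i (by omega)
  · calc a (i - 2) * a (j + 1) = a (i - 1 - 1) * a (j + 1) := by ring_nf
      _ ≤ a (i - 1) * a j := h (i - 1) j (by omega)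
      _ = a (i - 1) * a (j - 1 + 1) := by ring_nf
      _ ≤ a i * a (j - 1) := h i (j - 1) (by omega)

theorem add_mul_shift [IsOrderedRing R] (h : IsLogConcave a) {y : R} (hy : 0 ≤ y) :
    IsLogConcave fun n => a n + y * a (n - 1) := by
  intro i j hij
  have h₂ : a (i - 2) * a j ≤ a (i - 1) * a (j - 1) := by
    simpa [sub_sub] using h (i - 1) (j - 1) (by omega)
  simp only [add_sub_cancel_right, sub_sub, one_add_one_eq_two]
  linear_combination h i j hij + y * h.sub_two_mul_add_one_le hij + y ^ 2 * h₂

theorem sub_two_mul_add_mul_shift_le [IsOrderedRing R] (h : IsLogConcave a) (y : R) (k : ℤ) :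
    a (k - 2) * (a k + y * a (k - 1)) ≤ a (k - 1) * (a (k - 1) + y * a (k - 1 - 1)) := by
  have hk : a (k - 2) * a k ≤ a (k - 1) * a (k - 1) := by
    simpa [sub_sub] using h (k - 1) (k - 1) le_rfl
  rw [sub_sub, one_add_one_eq_two]
  linear_combination hk

end IsLogConcave

theorem isLogConcave_indicator_zero [IsOrderedRing R] :
    IsLogConcave fun n : ℤ => if n = 0 then (1 : R) else 0 := by
  intro i j hij
  dsimp only
  split_ifs <;> first | omega | norm_num

end LogConcave

section Esymm

variable {α R : Type*} [CommRing R]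

/-- Indexed by `ℤ` so that negative indices give `0`, matching the convention `τ_{-1} = 0`. -/
noncomputable def esymmInt (F : Finset α) (Y : α → R) (j : ℤ) : R :=
  ∑ S ∈ F.powerset with (S.card : ℤ) = j, ∏ f ∈ S, Y f

theorem esymmInt_empty (Y : α → R) (j : ℤ) :
    esymmInt ∅ Y j = if j = 0 then 1 else 0 := by
  rw [esymmInt, Finset.powerset_empty, Finset.sum_filter, Finset.sum_singleton]
  simp [eq_comm]

theorem esymmInt_of_neg (F : Finset α) (Y : α → R) {j : ℤ} (hj : j < 0) :
    esymmInt F Y j = 0 := by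
  refine Finset.sum_eq_zero fun S hS => ?_
  have := (Finset.mem_filter.1 hS).2
  omega

theorem esymmInt_insert [DecidableEq α] {F : Finset α} {a : α} (ha : a ∉ F) (Y : α → R)
    (j : ℤ) :
    esymmInt (insert a F) Y j = esymmInt F Y j + Y a * esymmInt F Y (j - 1) := by
  simp only [esymmInt, Finset.sum_filter, Finset.sum_powerset_insert ha, Finset.mul_sum]
  congr 1
  refine Finset.sum_congr rfl fun S hS => ?_
  have haS : a ∉ S := fun h => ha (Finset.mem_powerset.1 hS h)
  simp [Finset.card_insert_of_notMem haS, Finset.prod_insert haS, eq_sub_iff_add_eq]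

theorem isLogConcave_esymmInt [DecidableEq α] [PartialOrder R] [IsOrderedRing R] {Y : α → R}
    (F : Finset α) (hY : ∀ a ∈ F, 0 ≤ Y a) :
    IsLogConcave (esymmInt F Y) := by
  induction F using Finset.induction_on with
  | empty =>
    rw [show esymmInt ∅ Y = _ from funext (esymmInt_empty Y)]
    exact isLogConcave_indicator_zero
  | insert a F ha ih =>
    simp only [Finset.forall_mem_insert] at hY
    rw [show esymmInt (insert a F) Y = _ from funext (esymmInt_insert ha Y)]
    exact (ih hY.2).add_mul_shift hY.1

theorem sigmaSum_eq_esymmInt [DecidableEq α] (E : Finset α) (Y : α → ℝ) (n : ℕ) :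
    sigmaSum E Y n = esymmInt E Y n := by
  simp only [sigmaSum, esymmInt, Nat.cast_inj]

end Esymm

/-- For every `k ≥ 1`, `τ_{k−1}·σ_{k−1} ≥ τ_{k−2}·σ_k` (with the convention
`τ_{−1} = 0`, which is the `k = 1` case). -/
theorem statement_7 {α : Type*} [DecidableEq α] (E : Finset α) (e : α) (he : e ∈ E)
    (Y : α → ℝ) (hY : ∀ a ∈ E, 0 ≤ Y a) (k : ℕ) (hk : 1 ≤ k) :
    (if k = 1 then 0 else tauSum E e Y (k - 2) * sigmaSum E Y k)
      ≤ tauSum E e Y (k - 1) * sigmaSum E Y (k - 1) := by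
  set F := E.erase e
  have hτ (j : ℕ) : tauSum E e Y j = esymmInt F Y j := sigmaSum_eq_esymmInt F Y j
  have hσ (j : ℕ) : sigmaSum E Y j = esymmInt E Y j := sigmaSum_eq_esymmInt E Y j
  have hE (j : ℤ) : esymmInt E Y j = esymmInt F Y j + Y e * esymmInt F Y (j - 1) := by
    rw [← esymmInt_insert (Finset.notMem_erase e E), Finset.insert_erase he]
  have hLHS : (if k = 1 then 0 else tauSum E e Y (k - 2) * sigmaSum E Y k) =
      esymmInt F Y (k - 2) * esymmInt E Y k := by
    split_ifs with hk1
    · rw [hk1, esymmInt_of_neg F Y (by norm_num), zero_mul]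
    · rw [hτ, hσ, Nat.cast_sub (by omega), Nat.cast_two]
  have hF : IsLogConcave (esymmInt F Y) :=
    isLogConcave_esymmInt F fun a ha => hY a (Finset.mem_of_mem_erase ha)
  rw [hLHS, hτ, hσ, Nat.cast_sub hk, Nat.cast_one, hE, hE]
  exact hF.sub_two_mul_add_mul_shift_le (Y e) k
end

section
/- Let E be a finite set, w ≥ 1 an integer and X ∈ [0,1]^E. For e ∈ E say Q_e(X) is finite when Σ_{S ⊆ E\{e}, |S| = w} X^S > 0 (equivalently, at least w of the coordinates X_f with f ≠ e are positive), in which case Q_e(X) = (Σ_{S ⊆ E\{e}, |S| = w−1} X^S)/(Σ_{S ⊆ E\{e}, |S| = w} X^S); otherwise set Q_e(X) = ∞. Then Σ_{e∈E} [X_e Q_e(X)/(1 + X_e Q_e(X))]·1(Q_e(X) < ∞) = w · 1( #{e ∈ E : X_e > 0} ≥ w+1 ). -/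
/-!
Write `σ_j(s) = ∑_{S ⊆ s, |S| = j} X^S`. Sorting the `w`-subsets of `E` by whether they
contain `e` gives `σ_w(E) = σ_w(E∖e) + X_e σ_{w-1}(E∖e)`, so whenever `Q_e` is finite the `e`-th
summand equals `X_e σ_{w-1}(E∖e) / σ_w(E)`. If at least `w + 1` coordinates are positive, every
`Q_e` is finite and double counting gives `∑_e X_e σ_{w-1}(E∖e) = w σ_w(E)`. Otherwise a finite
`Q_e` forces `X_e = 0`, so every summand vanishes.
-/

open scoped Classical

/-- `Σ_{S ⊆ E\{e}, |S| = j} X^S`. -/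
noncomputable def sigEq {α : Type*} [DecidableEq α] (E : Finset α) (e : α) (j : ℕ)
    (X : α → ℝ) : ℝ :=
  ∑ S ∈ (E.erase e).powerset.filter (fun S => S.card = j), ∏ f ∈ S, X f

/-- `Q_e(X) = (Σ_{S ⊆ E\{e}, |S| = w−1} X^S)/(Σ_{S ⊆ E\{e}, |S| = w} X^S)` (finite case). -/
noncomputable def Qe {α : Type*} [DecidableEq α] (E : Finset α) (w : ℕ) (e : α)
    (X : α → ℝ) : ℝ :=
  sigEq E e (w - 1) X / sigEq E e w X

namespace Finset

variable {α R : Type*}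

theorem sum_powersetCard_prod_pos_iff [CommSemiring R] [LinearOrder R] [IsStrictOrderedRing R]
    {s : Finset α} {X : α → R} (hX : ∀ a ∈ s, 0 ≤ X a) (j : ℕ) :
    0 < ∑ S ∈ powersetCard j s, ∏ f ∈ S, X f ↔ j ≤ #{a ∈ s | 0 < X a} := by
  have hprod : ∀ S ∈ powersetCard j s, 0 ≤ ∏ f ∈ S, X f := fun S hS =>
    prod_nonneg fun f hf => hX f ((mem_powersetCard.1 hS).1 hf)
  constructor
  · intro h
    obtain ⟨S, hS, hSne⟩ := exists_ne_zero_of_sum_ne_zero h.ne'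
    obtain ⟨hSs, rfl⟩ := mem_powersetCard.1 hS
    refine card_le_card fun f hf => mem_filter.2 ⟨hSs hf, ?_⟩
    exact (hX f (hSs hf)).lt_of_ne' fun hf0 => hSne (prod_eq_zero hf hf0)
  · intro h
    obtain ⟨S, hS, rfl⟩ := exists_subset_card_eq h
    refine sum_pos' hprod ⟨S, mem_powersetCard.2 ⟨hS.trans (filter_subset _ _), rfl⟩, ?_⟩
    exact prod_pos fun f hf => (mem_filter.1 (hS hf)).2

variable [DecidableEq α]

section CommSemiring

variable [CommSemiring R]

theorem sum_powersetCard_succ_prod_of_mem {s : Finset α} {a : α} (ha : a ∈ s) (k : ℕ)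
    (X : α → R) :
    ∑ S ∈ powersetCard (k + 1) s, ∏ f ∈ S, X f =
      ∑ S ∈ powersetCard (k + 1) (s.erase a), ∏ f ∈ S, X f +
        X a * ∑ S ∈ powersetCard k (s.erase a), ∏ f ∈ S, X f := by
  have haS : ∀ S ∈ powersetCard k (s.erase a), a ∉ S := fun S hS haS =>
    notMem_erase a s ((mem_powersetCard.1 hS).1 haS)
  conv_lhs => rw [← insert_erase ha, powersetCard_succ_insert (notMem_erase a s)]
  rw [sum_union, sum_image, mul_sum]
  · exact congrArg _ (sum_congr rfl fun S hS => prod_insert (haS S hS))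
  · exact fun S hS T hT hST => by
      rw [← erase_insert (haS S hS), ← erase_insert (haS T hT), hST]
  · refine disjoint_left.2 fun S hS hS' => ?_
    obtain ⟨T, -, rfl⟩ := mem_image.1 hS'
    exact notMem_erase a s ((mem_powersetCard.1 hS).1 (mem_insert_self a T))

theorem sum_sum_powersetCard_erase_prod (s : Finset α) (j : ℕ) (X : α → R) :
    ∑ a ∈ s, ∑ S ∈ powersetCard j (s.erase a), ∏ f ∈ S, X f =
      (#s - j) • ∑ S ∈ powersetCard j s, ∏ f ∈ S, X f := by
  have h : ∀ a ∈ s, ∑ S ∈ powersetCard j (s.erase a), ∏ f ∈ S, X f =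
      ∑ S ∈ powersetCard j s, if a ∉ S then ∏ f ∈ S, X f else 0 := fun a _ => by
    rw [← sum_filter]
    congr 1
    ext S
    simp only [mem_powersetCard, mem_filter, subset_erase]
    tauto
  rw [sum_congr rfl h, sum_comm, smul_sum]
  refine sum_congr rfl fun S hS => ?_
  rw [← sum_filter, sum_const, ← sdiff_eq_filter, card_sdiff_of_subset (mem_powersetCard.1 hS).1,
    (mem_powersetCard.1 hS).2]

end CommSemiring

theorem sum_mul_sum_powersetCard_erase_prod [CommRing R] (s : Finset α) (k : ℕ) (X : α → R) :
    ∑ a ∈ s, X a * ∑ S ∈ powersetCard k (s.erase a), ∏ f ∈ S, X f =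
      (k + 1) * ∑ S ∈ powersetCard (k + 1) s, ∏ f ∈ S, X f := by
  rcases lt_or_ge #s (k + 1) with hs | hs
  · rw [powersetCard_eq_empty.2 hs, sum_empty, mul_zero]
    refine sum_eq_zero fun a ha => ?_
    have := card_pos.2 ⟨a, ha⟩
    rw [powersetCard_eq_empty.2 (by rw [card_erase_of_mem ha]; omega), sum_empty, mul_zero]
  · set σ := ∑ S ∈ powersetCard (k + 1) s, ∏ f ∈ S, X f
    calc ∑ a ∈ s, X a * ∑ S ∈ powersetCard k (s.erase a), ∏ f ∈ S, X f
        = ∑ a ∈ s, (σ - ∑ S ∈ powersetCard (k + 1) (s.erase a), ∏ f ∈ S, X f) :=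
          sum_congr rfl fun a ha =>
            eq_sub_of_add_eq' (sum_powersetCard_succ_prod_of_mem ha k X).symm
      _ = (k + 1) * σ := by
          rw [sum_sub_distrib, sum_sum_powersetCard_erase_prod, sum_const, nsmul_eq_mul,
            nsmul_eq_mul, Nat.cast_sub hs]
          push_cast
          ring

end Finset

theorem mul_div_div_one_add_mul_div {K : Type*} [Field K] (x a : K) {b : K} (hb : b ≠ 0) :
    x * (a / b) / (1 + x * (a / b)) = x * a / (b + x * a) := by
  rw [show 1 + x * (a / b) = (b + x * a) / b by field_simp, mul_div_assoc',
    div_div_div_cancel_right₀ hb]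

open Finset

theorem sigEq_eq_sum_powersetCard {α : Type*} [DecidableEq α] (E : Finset α) (e : α) (j : ℕ)
    (X : α → ℝ) : sigEq E e j X = ∑ S ∈ powersetCard j (E.erase e), ∏ f ∈ S, X f := by
  rw [sigEq, powersetCard_eq_filter]

/-- `Σ_{e∈E} [X_e Q_e(X)/(1 + X_e Q_e(X))]·1(Q_e(X) < ∞) = w·1(#{e : X_e > 0} ≥ w+1)`,
where `Q_e(X)` is finite exactly when `Σ_{S ⊆ E\{e}, |S| = w} X^S > 0`. -/
theorem statement_8 {α : Type*} [DecidableEq α] (E : Finset α) (w : ℕ) (hw : 1 ≤ w)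
    (X : α → ℝ) (hX : ∀ a ∈ E, 0 ≤ X a ∧ X a ≤ 1) :
    (∑ e ∈ E, if 0 < sigEq E e w X then
        X e * Qe E w e X / (1 + X e * Qe E w e X) else 0)
      = w * (if w + 1 ≤ (E.filter fun a => 0 < X a).card then 1 else 0) := by
  have hX₀ : ∀ a ∈ E, 0 ≤ X a := fun a ha => (hX a ha).1
  obtain ⟨k, rfl⟩ : ∃ k, w = k + 1 := ⟨w - 1, by omega⟩
  have hpos : ∀ e j, 0 < sigEq E e j X ↔ j ≤ #({a ∈ E | 0 < X a}.erase e) := fun e j => by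
    rw [sigEq_eq_sum_powersetCard, sum_powersetCard_prod_pos_iff
      (fun a ha => hX₀ a (mem_of_mem_erase ha)), filter_erase]
  simp only [Qe, Nat.add_sub_cancel]
  split_ifs with hP
  · have hσ : 0 < ∑ S ∈ powersetCard (k + 1) E, ∏ f ∈ S, X f :=
      (sum_powersetCard_prod_pos_iff hX₀ _).2 (by omega)
    calc _ = ∑ e ∈ E, X e * sigEq E e k X / ∑ S ∈ powersetCard (k + 1) E, ∏ f ∈ S, X f :=
          sum_congr rfl fun e he => by
            have hb : 0 < sigEq E e (k + 1) X := (hpos e _).2 (by grind [pred_card_le_card_erase])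
            rw [if_pos hb, mul_div_div_one_add_mul_div _ _ hb.ne',
              sum_powersetCard_succ_prod_of_mem he, sigEq_eq_sum_powersetCard,
              sigEq_eq_sum_powersetCard]
      _ = (k + 1 : ℕ) * 1 := by
          simp only [← sum_div, sigEq_eq_sum_powersetCard]
          rw [sum_mul_sum_powersetCard_erase_prod, mul_div_cancel_right₀ _ hσ.ne']
          push_cast
          ring
  · rw [mul_zero]
    refine sum_eq_zero fun e he => ?_
    split_ifs with hb
    · have hXe : X e = 0 := by
        by_contra hne
        have heP : e ∈ {a ∈ E | 0 < X a} := mem_filter.2 ⟨he, (hX₀ e he).lt_of_ne' hne⟩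
        rw [hpos, card_erase_of_mem heP] at hb
        omega
      simp [hXe]
    · rfl
end

section
/- Let G = (V,E) be a finite acyclic simple graph with degree constraints w = (w_v)_{v∈V}, w_v ≥ 1. Then for every z > 0 the fixed-point equation Y = z·R_G(Y) has a unique solution Y(z) ∈ [0,∞)^{oriented edges of G}. Moreover, for every vertex i, the joint law of (B_e)_{e incident to i} under the Gibbs measure μ_G^z equals the law of independent Bernoulli random variables (β_{x→i})_{x adjacent to i} with P(β_{x→i} = 1) = Y_{x→i}(z)/(1 + Y_{x→i}(z)), conditioned on Σ_{x adjacent to i} β_{x→i} ≤ w_i. -/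
open scoped Classical

variable {V : Type*} [Fintype V] [DecidableEq V]

/-- Admissible spanning subgraphs `F ⊆ E(G)`: every vertex `v` lies on at most `w v`
edges of `F`. -/
noncomputable def admFinset (G : SimpleGraph V) [DecidableRel G.Adj] (w : V → ℕ) :
    Finset (Finset (Sym2 V)) :=
  G.edgeFinset.powerset.filter (fun F => ∀ v : V, (F.filter fun e => v ∈ e).card ≤ w v)

/-- The message-passing map `R_G`: `(R_G Y) i j` is the message on the oriented edge
`i → j`, computed from the incoming messages `Y x i`, `x` a neighbour of `i`, `x ≠ j`:
`(Σ_{S ⊆ ∂i\{j→i}, |S| ≤ w_i − 1} Y^S)/(Σ_{S ⊆ ∂i\{j→i}, |S| ≤ w_i} Y^S)`. -/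
noncomputable def RG (G : SimpleGraph V) [DecidableRel G.Adj] (w : V → ℕ)
    (Y : V → V → ℝ) : V → V → ℝ := fun i j =>
  (∑ S ∈ ((G.neighborFinset i).erase j).powerset.filter (fun S => S.card < w i),
      ∏ x ∈ S, Y x i) /
  (∑ S ∈ ((G.neighborFinset i).erase j).powerset.filter (fun S => S.card ≤ w i),
      ∏ x ∈ S, Y x i)

/-!
On a forest, cutting the edge `x–i` splits off the subtree hanging from `x`, its branch. Let
`Z⁰_{x→i}` be the partition function of that branch and `Z¹_{x→i}` the same with the capacity
of `x` lowered by one (the unit used by the edge `x–i`), and put `Y_{x→i} = z Z¹_{x→i} / Z⁰_{x→i}`.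
Once the set `T` of edges present at `i` is fixed, the constraints decouple: the branch at a
neighbour `x` contributes `Z¹_{x→i}` or `Z⁰_{x→i}` according as `x ∈ T` or not, and the edges
away from `i` and its branches contribute a common factor. So the weight of `T` is proportional
to `[|T| ≤ w_i] ∏_{x ∈ T} Y_{x→i}`, which is the conditioned Bernoulli law. The same
decomposition inside the branch of `i → j` gives the recursion `Y = z R_G(Y)`; its solution is
unique by induction on the size of the branch, since `R_G` at `i → j` only reads messages coming
from strictly smaller branches.
-/

namespace BoundedDegree

open Finset

section PartitionFunction

variable {α : Type*}

def VertexDisjoint (A B : Finset (Sym2 α)) : Prop := ∀ e ∈ A, ∀ f ∈ B, ∀ v ∈ e, v ∉ f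

lemma VertexDisjoint.disjoint {A B : Finset (Sym2 α)} (h : VertexDisjoint A B) : Disjoint A B :=
  disjoint_left.mpr fun e hA hB => h e hA e hB _ e.out_fst_mem e.out_fst_mem

variable [DecidableEq α]

def degIn (F : Finset (Sym2 α)) (v : α) : ℕ := (F.filter fun e => v ∈ e).card

def IsAdmissible (w : α → ℕ) (F : Finset (Sym2 α)) : Prop := ∀ v, degIn F v ≤ w v

noncomputable def partitionFn (w : α → ℕ) (z : ℝ) (K : Finset (Sym2 α)) : ℝ :=
  ∑ F ∈ K.powerset.filter (IsAdmissible w), z ^ F.card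

variable {w w' : α → ℕ} {z : ℝ} {A B K : Finset (Sym2 α)}

lemma degIn_union (h : Disjoint A B) (v : α) : degIn (A ∪ B) v = degIn A v + degIn B v := by
  simp only [degIn, filter_union]
  exact card_union_of_disjoint (disjoint_filter_filter h)

lemma degIn_mono (h : A ⊆ B) (v : α) : degIn A v ≤ degIn B v :=
  card_le_card (filter_subset_filter _ h)

lemma degIn_eq_zero {v : α} (h : ∀ e ∈ A, v ∉ e) : degIn A v = 0 := by
  simpa [degIn, filter_eq_empty_iff] using h

lemma isAdmissible_union_iff (h : Disjoint A B) :
    IsAdmissible w (A ∪ B) ↔ IsAdmissible w A ∧ IsAdmissible (w - degIn A) B := by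
  simp only [IsAdmissible, degIn_union h, Pi.sub_apply, ← forall_and]
  -- truncated subtraction is harmless: the first conjunct gives `degIn A ≤ w`
  exact forall_congr' fun v => by omega

lemma sum_filter_inter_eq (hAB : Disjoint A B) {F₀ : Finset (Sym2 α)} (hF₀ : F₀ ⊆ A) :
    ∑ F ∈ (A ∪ B).powerset.filter (fun F => IsAdmissible w F ∧ F ∩ A = F₀), z ^ F.card =
      if IsAdmissible w F₀ then z ^ F₀.card * partitionFn (w - degIn F₀) z B else 0 := by
  have hF₀B : Disjoint F₀ B := hAB.mono_left hF₀
  split_ifs with h₀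
  · rw [partitionFn, mul_sum]
    have hsplit : ∀ F ⊆ A ∪ B, F ∩ A = F₀ → F₀ ∪ F ∩ B = F := fun F hF hFA => by
      rw [← hFA, ← inter_union_distrib_left, inter_eq_left.mpr hF]
    have hcap : ∀ G ⊆ B, (F₀ ∪ G) ∩ A = F₀ ∧ (F₀ ∪ G) ∩ B = G := fun G hG => by
      have hGA : Disjoint G A := (hAB.mono_right hG).symm
      constructor <;> ext e <;> simp only [mem_inter, mem_union] <;>
        grind [disjoint_left]
    refine sum_nbij' (· ∩ B) (F₀ ∪ ·) ?_ ?_ ?_ ?_ ?_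
    · simp only [mem_filter, mem_powerset]
      rintro F ⟨hF, hadm, hFA⟩
      rw [← hsplit F hF hFA,
        isAdmissible_union_iff (hF₀B.mono_right inter_subset_right)] at hadm
      exact ⟨inter_subset_right, hadm.2⟩
    · simp only [mem_filter, mem_powerset]
      rintro G ⟨hG, hadm⟩
      exact ⟨union_subset_union hF₀ hG,
        (isAdmissible_union_iff (hF₀B.mono_right hG)).mpr ⟨h₀, hadm⟩, (hcap G hG).1⟩
    · intro F hF
      simp only [mem_filter, mem_powerset] at hF
      exact hsplit F hF.1 hF.2.2
    · intro G hG
      simp only [mem_filter, mem_powerset] at hG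
      exact (hcap G hG.1).2
    · intro F hF
      simp only [mem_filter, mem_powerset] at hF
      rw [← pow_add, ← card_union_of_disjoint (hF₀B.mono_right inter_subset_right),
        hsplit F hF.1 hF.2.2]
  · refine sum_eq_zero fun F hF => absurd ?_ h₀
    obtain ⟨-, hadm, rfl⟩ := by simpa using hF
    exact fun v => (degIn_mono inter_subset_left v).trans (hadm v)

lemma partitionFn_union (hAB : Disjoint A B) :
    partitionFn w z (A ∪ B) = ∑ F₀ ∈ A.powerset.filter (IsAdmissible w),
      z ^ F₀.card * partitionFn (w - degIn F₀) z B := by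
  rw [partitionFn, ← sum_fiberwise_of_maps_to (g := (· ∩ A)) (t := A.powerset)
    (fun F _ => mem_powerset.mpr inter_subset_right), sum_filter]
  refine sum_congr rfl fun F₀ hF₀ => ?_
  rw [filter_filter, sum_filter_inter_eq hAB (mem_powerset.mp hF₀)]

lemma partitionFn_congr (h : ∀ e ∈ K, ∀ v ∈ e, w v = w' v) :
    partitionFn w z K = partitionFn w' z K := by
  refine sum_congr (filter_congr fun F hF => forall_congr' fun v => ?_) fun _ _ => rfl
  by_cases hv : ∃ e ∈ F, v ∈ e
  · obtain ⟨e, he, hve⟩ := hv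
    rw [h e (mem_powerset.mp hF he) v hve]
  · push Not at hv
    simp [degIn_eq_zero hv]

lemma isAdmissible_empty : IsAdmissible w (∅ : Finset (Sym2 α)) := by
  simp [IsAdmissible, degIn]

lemma partitionFn_empty : partitionFn w z ∅ = 1 := by
  simp [partitionFn, filter_singleton, isAdmissible_empty]

lemma partitionFn_pos (hz : 0 < z) : 0 < partitionFn w z K :=
  sum_pos' (fun F _ => (pow_pos hz _).le)
    ⟨∅, mem_filter.mpr ⟨empty_mem_powerset K, isAdmissible_empty⟩, by simp⟩

lemma partitionFn_union_of_vertexDisjoint (h : VertexDisjoint A B) :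
    partitionFn w z (A ∪ B) = partitionFn w z A * partitionFn w z B := by
  rw [partitionFn_union h.disjoint, partitionFn, sum_mul]
  refine sum_congr rfl fun F hF => congrArg _ (partitionFn_congr fun f hf v hvf => ?_)
  have hFA : F ⊆ A := mem_powerset.mp (mem_filter.mp hF).1
  rw [Pi.sub_apply, degIn_eq_zero fun e he hve => h e (hFA he) f hf v hve hvf, tsub_zero]

lemma partitionFn_sup {ι : Type*} {J : Finset ι} {P : ι → Finset (Sym2 α)}
    (hP : (J : Set ι).Pairwise fun x y => VertexDisjoint (P x) (P y)) :
    partitionFn w z (J.sup P) = ∏ x ∈ J, partitionFn w z (P x) := by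
  induction J using Finset.cons_induction with
  | empty => rw [sup_empty, prod_empty, bot_eq_empty, partitionFn_empty]
  | cons x J hx ih =>
    rw [sup_cons, prod_cons, sup_eq_union, partitionFn_union_of_vertexDisjoint,
      ih (hP.mono (by simp))]
    intro e he f hf
    obtain ⟨y, hy, hfy⟩ := mem_sup.mp hf
    exact hP (by simp) (by simp [hy]) (by rintro rfl; exact hx hy) e he f hfy

end PartitionFunction

section Star

variable {α : Type*} [DecidableEq α] {w : α → ℕ} {z : ℝ} {i : α} {J T : Finset α}
  {B : Finset (Sym2 α)}

def starEdges (i : α) (T : Finset α) : Finset (Sym2 α) := T.image fun x => s(x, i)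

lemma starEdges_injective (i : α) : Function.Injective (starEdges i) :=
  image_injective fun _ _ => Sym2.congr_left.mp

lemma card_starEdges (i : α) (T : Finset α) : (starEdges i T).card = T.card :=
  card_image_of_injective _ fun _ _ => Sym2.congr_left.mp

lemma filter_mem_eq_iff_inter_starEdges {F : Finset (Sym2 α)} :
    J.filter (fun x => s(x, i) ∈ F) = T ↔ F ∩ starEdges i J = starEdges i T := by
  have : F ∩ starEdges i J = starEdges i (J.filter fun x => s(x, i) ∈ F) := by
    ext e
    simp only [starEdges, mem_inter, mem_image, mem_filter]
    grind
  rw [this, (starEdges_injective i).eq_iff]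

lemma degIn_starEdges (v : α) :
    degIn (starEdges i T) v = if v = i then T.card else if v ∈ T then 1 else 0 := by
  rw [degIn, starEdges, filter_image, card_image_of_injective _ fun _ _ => Sym2.congr_left.mp]
  simp only [Sym2.mem_iff]
  split_ifs with hvi hvT <;> simp [*, filter_eq]

lemma isAdmissible_starEdges_iff (hT : ∀ x ∈ T, 1 ≤ w x) :
    IsAdmissible w (starEdges i T) ↔ T.card ≤ w i := by
  refine ⟨fun h => by simpa [degIn_starEdges] using h i, fun h v => ?_⟩
  rw [degIn_starEdges]
  split_ifs with hvi hvT
  · exact hvi ▸ h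
  · exact hT v hvT
  · exact Nat.zero_le _

lemma sum_filter_filter_mem_eq (hB : Disjoint (starEdges i J) B) (hT : T ⊆ J) :
    ∑ F ∈ (starEdges i J ∪ B).powerset.filter
        (fun F => IsAdmissible w F ∧ J.filter (fun x => s(x, i) ∈ F) = T), z ^ F.card =
      if IsAdmissible w (starEdges i T) then
        z ^ T.card * partitionFn (w - degIn (starEdges i T)) z B else 0 := by
  rw [← card_starEdges i T,
    ← sum_filter_inter_eq (F₀ := starEdges i T) hB (image_subset_image hT)]
  exact sum_congr (filter_congr fun F _ => and_congr_right' filter_mem_eq_iff_inter_starEdges)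
    fun _ _ => rfl

lemma partitionFn_starEdges_union (hB : Disjoint (starEdges i J) B) :
    partitionFn w z (starEdges i J ∪ B) = ∑ T ∈ J.powerset,
      if IsAdmissible w (starEdges i T) then
        z ^ T.card * partitionFn (w - degIn (starEdges i T)) z B else 0 := by
  rw [partitionFn, ← sum_fiberwise_of_maps_to (g := fun F => J.filter fun x => s(x, i) ∈ F)
    (t := J.powerset) (fun F _ => mem_powerset.mpr (filter_subset _ _))]
  refine sum_congr rfl fun T hT => ?_
  rw [filter_filter, sum_filter_filter_mem_eq hB (mem_powerset.mp hT)]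

end Star

section Side

open SimpleGraph

variable {α : Type*} {G : SimpleGraph α} {x y i j u v : α}

def side (G : SimpleGraph α) (x i : α) : Set α := {v | (G.deleteEdges {s(x, i)}).Reachable x v}

lemma mem_side_self : x ∈ side G x i := Reachable.refl x

lemma mem_side_of_adj (hv : v ∈ side G x i) (hvu : G.Adj v u) (hne : s(v, u) ≠ s(x, i)) :
    u ∈ side G x i :=
  Reachable.trans hv (deleteEdges_adj.mpr ⟨hvu, by simpa using hne⟩).reachable

lemma notMem_side (hG : G.IsAcyclic) (hxi : G.Adj x i) : i ∉ side G x i :=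
  isBridge_iff.mp (isAcyclic_iff_forall_adj_isBridge.mp hG hxi)

lemma reachable_deleteEdges_of_mem_side (hG : G.IsAcyclic) (hxi : G.Adj x i)
    (hv : v ∈ side G x i) {D : Set (Sym2 α)} (hD : ∀ e ∈ D, i ∈ e) :
    (G.deleteEdges D).Reachable x v := by
  obtain ⟨p⟩ := hv
  have hi : i ∉ p.support := fun hi => notMem_side hG hxi ⟨p.takeUntil i hi⟩
  refine Reachable.mono (deleteEdges_mono (deleteEdges_le _))
    ⟨p.toDeleteEdges D fun e he heD => hi (Walk.mem_support_of_mem_edges he (hD e heD))⟩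

lemma disjoint_side (hG : G.IsAcyclic) (hxi : G.Adj x i) (hyi : G.Adj y i) (hxy : x ≠ y) :
    Disjoint (side G x i) (side G y i) := by
  refine Set.disjoint_left.mpr fun v hvx hvy => notMem_side hG hyi ?_
  have hxv : (G.deleteEdges {s(y, i)}).Reachable x v :=
    reachable_deleteEdges_of_mem_side hG hxi hvx (by simp)
  have hxi' : (G.deleteEdges {s(y, i)}).Adj x i :=
    deleteEdges_adj.mpr ⟨hxi, fun h => hxy (Sym2.congr_left.mp h)⟩
  exact (Reachable.trans hvy hxv.symm).trans hxi'.reachable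

lemma side_subset_side (hG : G.IsAcyclic) (hix : G.Adj i x) (hxj : x ≠ j) :
    side G x i ⊆ side G i j := fun v hv => by
  have hxv : (G.deleteEdges {s(i, j)}).Reachable x v :=
    reachable_deleteEdges_of_mem_side hG hix.symm hv (by simp)
  have hix' : (G.deleteEdges {s(i, j)}).Adj i x :=
    deleteEdges_adj.mpr ⟨hix, fun h => hxj (Sym2.congr_right.mp h)⟩
  exact hix'.reachable.trans hxv

lemma exists_mem_side_of_mem_side (hu : u ∈ side G i j) (hui : u ≠ i) :
    ∃ x, G.Adj i x ∧ x ≠ j ∧ u ∈ side G x i := by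
  obtain ⟨p⟩ := hu
  obtain ⟨q, hq⟩ := p.toPath
  cases q with
  | nil => exact absurd rfl hui
  | @cons _ x _ hix q =>
    obtain ⟨hix, hne⟩ := deleteEdges_adj.mp hix
    rw [Walk.cons_isPath_iff] at hq
    refine ⟨x, hix, fun hxj => hne (by rw [hxj]; rfl), Reachable.mono
      (deleteEdges_mono (deleteEdges_le _)) ⟨q.toDeleteEdges _ fun e he hes => ?_⟩⟩
    rw [Set.mem_singleton_iff] at hes
    exact hq.2 (Walk.mem_support_of_mem_edges he (hes ▸ Sym2.mem_mk_right x i))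

end Side

section Branch

open SimpleGraph

variable {G : SimpleGraph V} [DecidableRel G.Adj] {x y i j v : V} {e : Sym2 V}

noncomputable def branch (G : SimpleGraph V) [DecidableRel G.Adj] (x i : V) : Finset (Sym2 V) :=
  G.edgeFinset.filter fun e => ∀ v ∈ e, v ∈ side G x i

lemma notMem_of_mem_branch (hG : G.IsAcyclic) (hxi : G.Adj x i) (he : e ∈ branch G x i) :
    i ∉ e :=
  fun hi => notMem_side hG hxi ((mem_filter.mp he).2 i hi)

lemma vertexDisjoint_branch (hG : G.IsAcyclic) (hxi : G.Adj x i) (hyi : G.Adj y i)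
    (hxy : x ≠ y) : VertexDisjoint (branch G x i) (branch G y i) :=
  fun _ he _ hf v hve hvf => Set.disjoint_left.mp (disjoint_side hG hxi hyi hxy)
    ((mem_filter.mp he).2 v hve) ((mem_filter.mp hf).2 v hvf)

lemma mem_starEdges_of_mem (he : e ∈ G.edgeFinset) (hi : i ∈ e) :
    e ∈ starEdges i (G.neighborFinset i) := by
  obtain ⟨x, rfl⟩ := Sym2.mem_iff_exists.mp hi
  exact mem_image.mpr ⟨x, by simpa using he, Sym2.eq_swap⟩

lemma mem_branch_of_mem_side (he : e ∈ G.edgeFinset) (hve : v ∈ e) (hv : v ∈ side G x i)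
    (hi : i ∉ e) : e ∈ branch G x i := by
  obtain ⟨u, rfl⟩ := Sym2.mem_iff_exists.mp hve
  refine mem_filter.mpr ⟨he, fun t ht => ?_⟩
  rcases Sym2.mem_iff.mp ht with rfl | rfl
  · exact hv
  · exact mem_side_of_adj hv (by simpa using he) fun h => hi (h ▸ Sym2.mem_mk_right x i)

lemma branch_eq (hG : G.IsAcyclic) (hij : G.Adj i j) :
    branch G i j = starEdges i ((G.neighborFinset i).erase j) ∪
      ((G.neighborFinset i).erase j).sup (branch G · i) := by
  ext e
  simp only [mem_union, mem_sup, mem_erase, mem_neighborFinset]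
  constructor
  · intro he
    obtain ⟨heE, hside⟩ := mem_filter.mp he
    by_cases hi : i ∈ e
    · obtain ⟨x, hx, rfl⟩ := mem_image.mp (mem_starEdges_of_mem heE hi)
      refine .inl (mem_image_of_mem _ (mem_erase.mpr ⟨?_, hx⟩))
      rintro rfl
      exact notMem_side hG hij (hside x (Sym2.mem_mk_left x i))
    · obtain ⟨x, hix, hxj, hvx⟩ :=
        exists_mem_side_of_mem_side (hside _ e.out_fst_mem) fun h => hi (h ▸ e.out_fst_mem)
      exact .inr ⟨x, ⟨hxj, hix⟩, mem_branch_of_mem_side heE e.out_fst_mem hvx hi⟩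
  · rintro (he | ⟨x, ⟨hxj, hix⟩, he⟩)
    · obtain ⟨x, hx, rfl⟩ := mem_image.mp he
      obtain ⟨hxj, hix⟩ := mem_erase.mp hx
      rw [mem_neighborFinset] at hix
      refine mem_filter.mpr ⟨by simpa using hix.symm, fun v hv => ?_⟩
      rcases Sym2.mem_iff.mp hv with rfl | rfl
      · exact side_subset_side hG hix hxj mem_side_self
      · exact mem_side_self
    · obtain ⟨heE, hside⟩ := mem_filter.mp he
      exact mem_filter.mpr ⟨heE, fun v hv => side_subset_side hG hix hxj (hside v hv)⟩

lemma branch_ssubset_branch (hG : G.IsAcyclic) (hij : G.Adj i j) (hix : G.Adj i x)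
    (hxj : x ≠ j) : branch G x i ⊂ branch G i j := by
  have hx : x ∈ (G.neighborFinset i).erase j := by simpa [hxj] using hix
  rw [branch_eq hG hij, ssubset_iff_of_subset ((le_sup (f := (branch G · i)) hx).trans
    subset_union_right)]
  exact ⟨s(x, i), mem_union_left _ (mem_image_of_mem _ hx),
    fun h => notMem_of_mem_branch hG hix.symm h (Sym2.mem_mk_right x i)⟩

end Branch

section Products

lemma prod_mul_prod_sdiff_eq {ι : Type*} [DecidableEq ι] {J T : Finset ι} (hT : T ⊆ J)
    {f g : ι → ℝ} (hg : ∀ x ∈ T, g x ≠ 0) :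
    (∏ x ∈ T, f x) * ∏ x ∈ J \ T, g x = (∏ x ∈ J, g x) * ∏ x ∈ T, f x / g x := by
  rw [← prod_sdiff hT, mul_assoc, ← prod_mul_distrib,
    prod_congr rfl fun x hx => mul_div_cancel₀ (f x) (hg x hx), mul_comm]

lemma prod_div_one_add_mul_prod_sdiff {ι : Type*} [DecidableEq ι] {N T : Finset ι}
    (hT : T ⊆ N) {p : ι → ℝ} (hp : ∀ x ∈ T, 1 + p x ≠ 0) :
    (∏ x ∈ T, p x / (1 + p x)) * ∏ x ∈ N \ T, 1 / (1 + p x) =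
      (∏ x ∈ N, 1 / (1 + p x)) * ∏ x ∈ T, p x := by
  rw [prod_mul_prod_sdiff_eq hT fun x hx => one_div_ne_zero (hp x hx)]
  exact congrArg _ (prod_congr rfl fun x hx => by field_simp [hp x hx])

end Products

section StarDecomposition

open SimpleGraph

variable {G : SimpleGraph V} [DecidableRel G.Adj] {w u : V → ℕ} {z : ℝ} {i : V}
  {J T : Finset V} {R : Finset (Sym2 V)}

def AvoidsBranches (G : SimpleGraph V) (i : V) (J : Finset V) (R : Finset (Sym2 V)) : Prop :=
  ∀ f ∈ R, ∀ v ∈ f, v ≠ i ∧ ∀ x ∈ J, v ∉ side G x i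

noncomputable def message (G : SimpleGraph V) [DecidableRel G.Adj] (w : V → ℕ) (z : ℝ)
    (x i : V) : ℝ :=
  z * partitionFn (w - Pi.single x 1) z (branch G x i) / partitionFn w z (branch G x i)

lemma partitionFn_branch_sub_degIn_starEdges (hG : G.IsAcyclic) (hJ : ∀ x ∈ J, G.Adj x i)
    (hu : ∀ v ≠ i, u v = w v) (hT : T ⊆ J) {x : V} (hx : x ∈ J) :
    partitionFn (u - degIn (starEdges i T)) z (branch G x i) =
      if x ∈ T then partitionFn (w - Pi.single x 1) z (branch G x i)
      else partitionFn w z (branch G x i) := by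
  have hloc : ∀ e ∈ branch G x i, ∀ v ∈ e, v ≠ i ∧ (v ∈ T ↔ v = x ∧ x ∈ T) := by
    intro e he v hv
    have hvx := (mem_filter.mp he).2 v hv
    have hvJ : v ∈ J → v = x := fun hvJ => by_contra fun hne =>
      Set.disjoint_left.mp (disjoint_side hG (hJ v hvJ) (hJ x hx) hne) mem_side_self hvx
    exact ⟨fun hvi => notMem_side hG (hJ x hx) (hvi ▸ hvx),
      fun h => ⟨hvJ (hT h), hvJ (hT h) ▸ h⟩, fun ⟨h, hxT⟩ => h ▸ hxT⟩
  split_ifs with hxT <;> refine partitionFn_congr fun e he v hv => ?_ <;>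
    obtain ⟨hvi, hvT⟩ := hloc e he v hv <;>
    simp [degIn_starEdges, hvi, hu v hvi, Pi.single_apply, hvT, hxT]

lemma ite_isAdmissible_starEdges_eq (hG : G.IsAcyclic) (hw : ∀ v, 1 ≤ w v) (hz : 0 < z)
    (hJ : ∀ x ∈ J, G.Adj x i) (hu : ∀ v ≠ i, u v = w v)
    (hR : AvoidsBranches G i J R) (hT : T ⊆ J) :
    (if IsAdmissible u (starEdges i T) then
        z ^ T.card * partitionFn (u - degIn (starEdges i T)) z (J.sup (branch G · i) ∪ R)
      else 0) =
      (∏ x ∈ J, partitionFn w z (branch G x i)) * partitionFn w z R *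
        if T.card ≤ u i then ∏ x ∈ T, message G w z x i else 0 := by
  have hiJ : i ∉ J := fun hi => (hJ i hi).ne rfl
  rw [isAdmissible_starEdges_iff fun x hx => hu x (ne_of_mem_of_not_mem (hT hx) hiJ) ▸ hw x]
  split_ifs with hTi
  swap
  · rw [mul_zero]
  have hsupR : VertexDisjoint (J.sup (branch G · i)) R := fun e he f hf v hve hvf => by
    obtain ⟨x, hx, hex⟩ := mem_sup.mp he
    exact (hR f hf v hvf).2 x hx ((mem_filter.mp hex).2 v hve)
  have hRloc : ∀ f ∈ R, ∀ v ∈ f, (u - degIn (starEdges i T)) v = w v := fun f hf v hv => by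
    obtain ⟨hvi, hvJ⟩ := hR f hf v hv
    have hvT : v ∉ T := fun h => hvJ v (hT h) mem_side_self
    simp [degIn_starEdges, hvi, hvT, hu v hvi]
  rw [partitionFn_union_of_vertexDisjoint hsupR, partitionFn_congr hRloc,
    partitionFn_sup fun x hx y hy hxy => vertexDisjoint_branch hG (hJ x hx) (hJ y hy) hxy,
    prod_congr rfl fun x hx => partitionFn_branch_sub_degIn_starEdges hG hJ hu hT hx,
    prod_ite, filter_mem_eq_inter, inter_eq_right.mpr hT, filter_notMem_eq_sdiff]
  simp only [message]
  have key := prod_mul_prod_sdiff_eq hT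
    (f := fun x => z * partitionFn (w - Pi.single x 1) z (branch G x i))
    (g := fun x => partitionFn w z (branch G x i)) fun x _ => (partitionFn_pos hz).ne'
  rw [prod_mul_distrib, prod_const] at key
  linear_combination partitionFn w z R * key

lemma disjoint_starEdges_sup_branch_union (hG : G.IsAcyclic) (hJ : ∀ x ∈ J, G.Adj x i)
    (hR : AvoidsBranches G i J R) :
    Disjoint (starEdges i J) (J.sup (branch G · i) ∪ R) := by
  refine disjoint_left.mpr fun e he he' => ?_
  obtain ⟨x, -, rfl⟩ := mem_image.mp he
  rcases mem_union.mp he' with h | h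
  · obtain ⟨y, hy, hey⟩ := mem_sup.mp h
    exact notMem_of_mem_branch hG (hJ y hy) hey (Sym2.mem_mk_right x i)
  · exact (hR _ h i (Sym2.mem_mk_right x i)).1 rfl

lemma sum_filter_starEdges_union_sup_branch (hG : G.IsAcyclic) (hw : ∀ v, 1 ≤ w v)
    (hz : 0 < z) (hJ : ∀ x ∈ J, G.Adj x i) (hu : ∀ v ≠ i, u v = w v)
    (hR : AvoidsBranches G i J R) (hT : T ⊆ J) :
    ∑ F ∈ (starEdges i J ∪ (J.sup (branch G · i) ∪ R)).powerset.filter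
        (fun F => IsAdmissible u F ∧ J.filter (fun x => s(x, i) ∈ F) = T), z ^ F.card =
      (∏ x ∈ J, partitionFn w z (branch G x i)) * partitionFn w z R *
        if T.card ≤ u i then ∏ x ∈ T, message G w z x i else 0 := by
  rw [sum_filter_filter_mem_eq (disjoint_starEdges_sup_branch_union hG hJ hR) hT,
    ite_isAdmissible_starEdges_eq hG hw hz hJ hu hR hT]

lemma partitionFn_starEdges_union_sup_branch (hG : G.IsAcyclic) (hw : ∀ v, 1 ≤ w v)
    (hz : 0 < z) (hJ : ∀ x ∈ J, G.Adj x i) (hu : ∀ v ≠ i, u v = w v)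
    (hR : AvoidsBranches G i J R) :
    partitionFn u z (starEdges i J ∪ (J.sup (branch G · i) ∪ R)) =
      (∏ x ∈ J, partitionFn w z (branch G x i)) * partitionFn w z R *
        ∑ T ∈ J.powerset.filter (fun T => T.card ≤ u i), ∏ x ∈ T, message G w z x i := by
  rw [partitionFn_starEdges_union (disjoint_starEdges_sup_branch_union hG hJ hR), sum_filter,
    mul_sum]
  exact sum_congr rfl fun T hT => ite_isAdmissible_starEdges_eq hG hw hz hJ hu hR
    (mem_powerset.mp hT)

end StarDecomposition

section Messages

open SimpleGraph

variable {G : SimpleGraph V} [DecidableRel G.Adj] {w u : V → ℕ} {z : ℝ} {i j : V}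

lemma partitionFn_branch (hG : G.IsAcyclic) (hw : ∀ v, 1 ≤ w v) (hz : 0 < z)
    (hij : G.Adj i j) (hu : ∀ v ≠ i, u v = w v) :
    partitionFn u z (branch G i j) =
      (∏ x ∈ (G.neighborFinset i).erase j, partitionFn w z (branch G x i)) *
        ∑ T ∈ ((G.neighborFinset i).erase j).powerset.filter (fun T => T.card ≤ u i),
          ∏ x ∈ T, message G w z x i := by
  have hJ : ∀ x ∈ (G.neighborFinset i).erase j, G.Adj x i := fun x hx =>
    ((mem_neighborFinset _ _ _).mp (mem_of_mem_erase hx)).symm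
  rw [branch_eq hG hij, ← union_empty (((G.neighborFinset i).erase j).sup (branch G · i)),
    partitionFn_starEdges_union_sup_branch hG hw hz hJ hu (by simp [AvoidsBranches]),
    partitionFn_empty,
    mul_one]

lemma message_eq_mul_RG (hG : G.IsAcyclic) (hw : ∀ v, 1 ≤ w v) (hz : 0 < z)
    (hij : G.Adj i j) : message G w z i j = z * RG G w (message G w z) i j := by
  have hsub : ∀ v ≠ i, (w - Pi.single i 1 : V → ℕ) v = w v := fun v hv => by simp [hv]
  rw [message, partitionFn_branch hG hw hz hij hsub, partitionFn_branch hG hw hz hij fun _ _ => rfl,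
    mul_div_assoc, mul_div_mul_left _ _ (prod_pos fun x _ => partitionFn_pos hz).ne', RG]
  congr 3
  ext T
  simp only [mem_filter, Pi.sub_apply, Pi.single_eq_same]
  have := hw i
  exact and_congr_right fun _ => by omega

lemma message_nonneg (hz : 0 < z) (x i : V) : 0 ≤ message G w z x i :=
  div_nonneg (mul_nonneg hz.le (partitionFn_pos hz).le) (partitionFn_pos hz).le

lemma RG_congr {Y Y' : V → V → ℝ}
    (h : ∀ x ∈ (G.neighborFinset i).erase j, Y x i = Y' x i) :
    RG G w Y i j = RG G w Y' i j := by
  unfold RG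
  congr 1 <;> exact sum_congr rfl fun S hS => prod_congr rfl fun x hx =>
    h x (mem_powerset.mp (mem_filter.mp hS).1 hx)

lemma eq_message_of_eq_mul_RG (hG : G.IsAcyclic) (hw : ∀ v, 1 ≤ w v) (hz : 0 < z)
    {Y : V → V → ℝ} (hY : ∀ i j, G.Adj i j → Y i j = z * RG G w Y i j) (hij : G.Adj i j) :
    Y i j = message G w z i j := by
  induction hn : (branch G i j).card using Nat.strong_induction_on generalizing i j with
  | _ n ih =>
    rw [hY i j hij, message_eq_mul_RG hG hw hz hij, RG_congr fun x hx => ?_]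
    obtain ⟨hxj, hix⟩ := mem_erase.mp hx
    rw [mem_neighborFinset] at hix
    exact ih _ (hn ▸ card_lt_card (branch_ssubset_branch hG hij hix hxj)) hix.symm rfl

end Messages

section Marginal

open SimpleGraph

variable {G : SimpleGraph V} [DecidableRel G.Adj] {w : V → ℕ} {z : ℝ} {i : V} {T : Finset V}

noncomputable def remoteEdges (G : SimpleGraph V) [DecidableRel G.Adj] (i : V) :
    Finset (Sym2 V) :=
  G.edgeFinset \ (starEdges i (G.neighborFinset i) ∪ (G.neighborFinset i).sup (branch G · i))

lemma edgeFinset_eq_union (i : V) :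
    G.edgeFinset = starEdges i (G.neighborFinset i) ∪
      ((G.neighborFinset i).sup (branch G · i) ∪ remoteEdges G i) := by
  rw [remoteEdges, ← union_assoc, union_sdiff_of_subset]
  refine union_subset (fun e he => ?_) (Finset.sup_le fun x _ => filter_subset _ _)
  obtain ⟨x, hx, rfl⟩ := mem_image.mp he
  simpa [adj_comm] using hx

lemma ne_and_notMem_side_of_mem_remoteEdges {f : Sym2 V} (hf : f ∈ remoteEdges G i) {v : V}
    (hv : v ∈ f) : v ≠ i ∧ ∀ x ∈ G.neighborFinset i, v ∉ side G x i := by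
  obtain ⟨hfE, hfK⟩ := mem_sdiff.mp hf
  refine ⟨fun hvi => hfK (mem_union_left _ (mem_starEdges_of_mem hfE (hvi ▸ hv))),
    fun x hx hvx => hfK ?_⟩
  by_cases hi : i ∈ f
  · exact mem_union_left _ (mem_starEdges_of_mem hfE hi)
  · exact mem_union_right _ (mem_sup.mpr ⟨x, hx, mem_branch_of_mem_side hfE hv hvx hi⟩)

lemma admFinset_eq : admFinset G w = G.edgeFinset.powerset.filter (IsAdmissible w) := by
  ext F
  simp [admFinset, IsAdmissible, degIn]

lemma sum_admFinset_filter_eq (hG : G.IsAcyclic) (hw : ∀ v, 1 ≤ w v) (hz : 0 < z)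
    (hT : T ⊆ G.neighborFinset i) :
    ∑ F ∈ (admFinset G w).filter
        (fun F => (G.neighborFinset i).filter (fun x => s(x, i) ∈ F) = T), z ^ F.card =
      (∏ x ∈ G.neighborFinset i, partitionFn w z (branch G x i)) *
        partitionFn w z (remoteEdges G i) *
          if T.card ≤ w i then ∏ x ∈ T, message G w z x i else 0 := by
  rw [admFinset_eq, filter_filter, edgeFinset_eq_union i]
  exact sum_filter_starEdges_union_sup_branch hG hw hz (fun x hx => (by simpa [adj_comm] using hx))
    (fun _ _ => rfl) (fun f hf v hv => ne_and_notMem_side_of_mem_remoteEdges hf hv) hT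

lemma sum_admFinset_eq (hG : G.IsAcyclic) (hw : ∀ v, 1 ≤ w v) (hz : 0 < z) (i : V) :
    ∑ F ∈ admFinset G w, z ^ F.card =
      (∏ x ∈ G.neighborFinset i, partitionFn w z (branch G x i)) *
        partitionFn w z (remoteEdges G i) *
          ∑ S ∈ (G.neighborFinset i).powerset.filter (fun S => S.card ≤ w i),
            ∏ x ∈ S, message G w z x i := by
  rw [admFinset_eq, ← partitionFn, edgeFinset_eq_union i]
  exact partitionFn_starEdges_union_sup_branch hG hw hz (fun x hx => (by simpa [adj_comm] using hx))
    (fun _ _ => rfl) (fun f hf v hv => ne_and_notMem_side_of_mem_remoteEdges hf hv)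

end Marginal

end BoundedDegree

open BoundedDegree Finset

/-- On a finite acyclic graph, for every `z > 0` the fixed-point equation
`Y = z·R_G(Y)` has a unique nonnegative solution on oriented edges; moreover, for every
vertex `i`, the joint law under the Gibbs measure `μ_G^z` of the indicators of the edges
incident to `i` equals the law of independent Bernoulli variables `β_{x→i}` with
`P(β_{x→i} = 1) = Y_{x→i}(z)/(1+Y_{x→i}(z))`, conditioned on `Σ_x β_{x→i} ≤ w i`. -/
theorem statement_10 (G : SimpleGraph V) [DecidableRel G.Adj] (hG : G.IsAcyclic)
    (w : V → ℕ) (hw : ∀ v, 1 ≤ w v) (z : ℝ) (hz : 0 < z) :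
    ∃ Y : V → V → ℝ,
      (∀ i j, G.Adj i j → 0 ≤ Y i j ∧ Y i j = z * RG G w Y i j) ∧
      (∀ Y' : V → V → ℝ,
        (∀ i j, G.Adj i j → 0 ≤ Y' i j ∧ Y' i j = z * RG G w Y' i j) →
        ∀ i j, G.Adj i j → Y' i j = Y i j) ∧
      ∀ i : V, ∀ T ∈ (G.neighborFinset i).powerset,
        (∑ F ∈ (admFinset G w).filter
            (fun F => (G.neighborFinset i).filter (fun x => s(x, i) ∈ F) = T),
          z ^ F.card) / (∑ F ∈ admFinset G w, z ^ F.card)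
        =
        (if T.card ≤ w i then
            (∏ x ∈ T, Y x i / (1 + Y x i)) *
              ∏ x ∈ (G.neighborFinset i) \ T, 1 / (1 + Y x i)
          else 0) /
        (∑ S ∈ (G.neighborFinset i).powerset.filter (fun S => S.card ≤ w i),
          (∏ x ∈ S, Y x i / (1 + Y x i)) *
            ∏ x ∈ (G.neighborFinset i) \ S, 1 / (1 + Y x i)) := by
  refine ⟨message G w z,
    fun i j hij => ⟨message_nonneg hz i j, message_eq_mul_RG hG hw hz hij⟩,
    fun Y hY i j hij => eq_message_of_eq_mul_RG hG hw hz (fun i j h => (hY i j h).2) hij,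
    fun i T hT => ?_⟩
  have hpos : ∀ x, 0 < 1 + message G w z x i := fun x =>
    add_pos_of_pos_of_nonneg one_pos (message_nonneg hz x i)
  have hbern := fun S (hS : S ⊆ G.neighborFinset i) =>
    prod_div_one_add_mul_prod_sdiff (p := (message G w z · i)) hS fun x _ => (hpos x).ne'
  have hC : 0 < (∏ x ∈ G.neighborFinset i, partitionFn w z (branch G x i)) *
      partitionFn w z (remoteEdges G i) :=
    mul_pos (prod_pos fun x _ => partitionFn_pos hz) (partitionFn_pos hz)
  have hP : 0 < ∏ x ∈ G.neighborFinset i, 1 / (1 + message G w z x i) :=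
    prod_pos fun x _ => one_div_pos.mpr (hpos x)
  rw [sum_admFinset_filter_eq hG hw hz (mem_powerset.mp hT), sum_admFinset_eq hG hw hz i,
    hbern T (mem_powerset.mp hT),
    sum_congr rfl fun S hS => hbern S (mem_powerset.mp (mem_filter.mp hS).1), ← mul_sum]
  split_ifs
  · rw [mul_div_mul_left _ _ hC.ne', mul_div_mul_left _ _ hP.ne']
  · simp
end

section
/- Let G = (V,E) be a finite acyclic simple graph with degree constraints w = (w_v)_{v∈V}. Then there is a unique vector I ∈ {0,1}^{oriented edges of G} satisfying I = P_G(I), and 2·M(G) = Σ_{v∈V} ( w_v · 1( Σ_{e∈∂v} I_e ≥ w_v + 1 ) + min( w_v, Σ_{e∈∂v} I_e ) ), where ∂v is the set of oriented edges pointing to v. -/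
/-!
A finite forest with at least one edge has a leaf `u`, with unique neighbour `v`. At a fixed point
the message `u → v` is forced to be `1(w u > 0)`, so deleting the edge `uv` and lowering the
capacity of `v` by that message turns fixed points for `G` into fixed points for the smaller forest
and back; the remaining message `v → u` is then determined by the messages into `v`. On the
matching side, when `w u, w v > 0` a maximum admissible subgraph can be assumed to contain `uv`
(trade any edge at `v` for it), so `M` drops by exactly `1(w u > 0 ∧ w v > 0)`, and a two-vertex
computation shows that the right-hand side drops by twice that amount. Induction on the number of
edges finishes the proof.
-/

open scoped Classical

variable {V : Type*} [Fintype V] [DecidableEq V]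

/-- `M(G)`: maximum size of an admissible spanning subgraph. -/
noncomputable def MG (G : SimpleGraph V) [DecidableRel G.Adj] (w : V → ℕ) : ℕ :=
  (admFinset G w).sup Finset.card

/-- The operator `P_G` on `{0,1}`-messages: the `(i→j)`-entry of `P_G(I)` is `1` iff
`Σ_{f ∈ ∂i, f ≠ (j→i)} I_f < w i`. Here `I x i` is the message on the oriented edge
`x → i`. -/
def PGop (G : SimpleGraph V) [DecidableRel G.Adj] (w : V → ℕ)
    (I : V → V → Bool) : V → V → Bool := fun i j =>
  decide ((((G.neighborFinset i).erase j).filter fun x => I x i = true).card < w i)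

open Finset

namespace SimpleGraph

section

variable {α : Type*} {G : SimpleGraph α}

theorem IsAcyclic.exists_leaf [Finite G.edgeSet] (hG : G.IsAcyclic) {a b : α} (hab : G.Adj a b) :
    ∃ u v, G.Adj u v ∧ ∀ x, G.Adj u x → x = v := by
  have : Nonempty α := ⟨a⟩
  obtain ⟨u, v, p, hp, hmax⟩ := Walk.exists_isPath_forall_isPath_length_le_length G
  have hnil : ¬p.Nil := fun h => by
    simpa [h.length_eq_zero] using hmax a b (.cons hab .nil) (by simp [hab.ne])
  refine ⟨u, p.snd, p.adj_snd hnil, fun x hx => hG.eq_snd_of_adj_start hp hx ?_⟩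
  by_contra hxp
  simpa using hmax x v (p.cons hx.symm) (hp.cons hxp)

theorem adj_cases_of_leaf {u v i j : α} (hleaf : ∀ x, G.Adj u x → x = v) (hij : G.Adj i j) :
    (i = u ∧ j = v) ∨ (i = v ∧ j = u) ∨ (G.deleteIncidenceSet u).Adj i j := by
  rw [deleteIncidenceSet_adj]
  by_cases hi : i = u
  · exact .inl ⟨hi, hleaf j (hi ▸ hij)⟩
  by_cases hj : j = u
  · exact .inr (.inl ⟨hleaf i (hj ▸ hij.symm), hj⟩)
  exact .inr (.inr ⟨hij, hi, hj⟩)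

theorem eq_of_mem_edgeSet_of_leaf {u v : α} (hleaf : ∀ x, G.Adj u x → x = v) {e : Sym2 α}
    (he : e ∈ G.edgeSet) (hu : u ∈ e) : e = s(u, v) := by
  obtain ⟨y, rfl⟩ := Sym2.mem_iff_exists.1 hu
  rw [hleaf y he]

end

variable {G : SimpleGraph V}

theorem IsAcyclic.leaf_induction {P : ∀ (G : SimpleGraph V) [DecidableRel G.Adj], Prop}
    (empty : ∀ (G : SimpleGraph V) [DecidableRel G.Adj], (∀ a b, ¬G.Adj a b) → P G)
    (leaf : ∀ (G : SimpleGraph V) [DecidableRel G.Adj] (u v : V), G.Adj u v →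
      (∀ x, G.Adj u x → x = v) → P (G.deleteIncidenceSet u) → P G)
    (G : SimpleGraph V) [DecidableRel G.Adj] (hG : G.IsAcyclic) : P G := by
  induction hn : #G.edgeFinset using Nat.strong_induction_on generalizing G with
  | _ n ih =>
  rcases em (∃ a b, G.Adj a b) with ⟨a, b, hab⟩ | hE
  · obtain ⟨u, v, huv, hleaf⟩ := hG.exists_leaf hab
    refine leaf G u v huv hleaf (ih _ ?_ _ (hG.anti (G.deleteIncidenceSet_le u)) rfl)
    have : 0 < G.degree u := (G.degree_pos_iff_exists_adj u).2 ⟨v, huv⟩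
    have : 0 < #G.edgeFinset := Finset.card_pos.2 ⟨s(u, v), by simpa using huv⟩
    rw [← hn, card_edgeFinset_deleteIncidenceSet]
    omega
  · exact empty G fun a b hab => hE ⟨a, b, hab⟩

variable [DecidableRel G.Adj]

theorem neighborFinset_deleteIncidenceSet_of_ne {u i : V} (hi : i ≠ u) :
    (G.deleteIncidenceSet u).neighborFinset i = (G.neighborFinset i).erase u := by
  ext x
  simp [deleteIncidenceSet_adj, hi, and_comm]

theorem neighborFinset_deleteIncidenceSet_self (u : V) :
    (G.deleteIncidenceSet u).neighborFinset u = ∅ := by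
  ext x
  simp [deleteIncidenceSet_adj]

end SimpleGraph

theorem Finset.card_filter_eq_card_filter_erase_add {α : Type*} [DecidableEq α] {s : Finset α}
    {a : α} (ha : a ∈ s) (p : α → Prop) [DecidablePred p] :
    #(s.filter p) = #((s.erase a).filter p) + if p a then 1 else 0 := by
  rw [card_filter, card_filter, ← add_sum_erase _ _ ha, add_comm]

open SimpleGraph

section Messages

variable (G : SimpleGraph V) [DecidableRel G.Adj]

def IsMessageFixedPt (w : V → ℕ) (I : V → V → Bool) : Prop :=
  ∀ i j, G.Adj i j → I i j = PGop G w I i j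

def inCount (I : V → V → Bool) (v : V) : ℕ :=
  #((G.neighborFinset v).filter fun x => I x v = true)

variable {G} {w : V → ℕ}

theorem PGop_congr {I J : V → V → Bool} {i j : V}
    (h : ∀ x, G.Adj x i → x ≠ j → I x i = J x i) : PGop G w I i j = PGop G w J i j := by
  unfold PGop
  congr 3
  refine filter_congr fun x hx => ?_
  obtain ⟨hxj, hx⟩ := mem_erase.1 hx
  rw [h x ((G.mem_neighborFinset i x).1 hx).symm hxj]

theorem IsMessageFixedPt.congr {I J : V → V → Bool} (hI : IsMessageFixedPt G w I)
    (h : ∀ x i, G.Adj x i → I x i = J x i) : IsMessageFixedPt G w J := fun i j hij => by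
  rw [← h i j hij, hI i j hij, PGop_congr fun x hx _ => h x i hx]

end Messages

section Leaf

variable {G : SimpleGraph V} [DecidableRel G.Adj] {u v : V}

def leafReducedWeight (w : V → ℕ) (u v : V) : V → ℕ :=
  Function.update w v (w v - if 0 < w u then 1 else 0)

theorem PGop_leaf (hleaf : ∀ x, G.Adj u x → x = v) (w : V → ℕ) (I : V → V → Bool) :
    PGop G w I u v = decide (0 < w u) := by
  have : (G.neighborFinset u).erase v = ∅ := by
    ext x
    simpa using fun hxv hx => hxv (hleaf x hx)
  simp [PGop, this]

theorem PGop_toward_leaf (huv : G.Adj u v) (w : V → ℕ) (I : V → V → Bool) :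
    PGop G w I v u = decide (inCount (G.deleteIncidenceSet u) I v < w v) := by
  rw [PGop, inCount, neighborFinset_deleteIncidenceSet_of_ne huv.ne']

theorem PGop_deleteIncidenceSet_of_leaf (huv : G.Adj u v) (hleaf : ∀ x, G.Adj u x → x = v)
    {w : V → ℕ} {I : V → V → Bool} (hI : I u v = decide (0 < w u)) {i j : V} (hi : i ≠ u)
    (hj : j ≠ u) :
    PGop (G.deleteIncidenceSet u) (leafReducedWeight w u v) I i j = PGop G w I i j := by
  unfold PGop leafReducedWeight
  rw [decide_eq_decide, neighborFinset_deleteIncidenceSet_of_ne hi, erase_right_comm]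
  by_cases hiv : i = v
  · subst hiv
    have hu : u ∈ (G.neighborFinset i).erase j :=
      mem_erase.2 ⟨hj.symm, (G.mem_neighborFinset _ _).2 huv.symm⟩
    rw [card_filter_eq_card_filter_erase_add hu, hI, Function.update_self]
    simp only [decide_eq_true_eq]
    split_ifs <;> omega
  · have hu : u ∉ (G.neighborFinset i).erase j := fun h =>
      hiv (hleaf i ((G.mem_neighborFinset _ _).1 (mem_of_mem_erase h)).symm)
    rw [erase_eq_of_notMem hu, Function.update_of_ne hiv]

theorem isMessageFixedPt_iff_of_leaf (huv : G.Adj u v) (hleaf : ∀ x, G.Adj u x → x = v)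
    {w : V → ℕ} {I : V → V → Bool} :
    IsMessageFixedPt G w I ↔ I u v = decide (0 < w u) ∧ I v u = PGop G w I v u ∧
      IsMessageFixedPt (G.deleteIncidenceSet u) (leafReducedWeight w u v) I := by
  constructor
  · intro hI
    have hIuv : I u v = decide (0 < w u) := (hI u v huv).trans (PGop_leaf hleaf w I)
    refine ⟨hIuv, hI v u huv.symm, fun i j hij => ?_⟩
    obtain ⟨hij, hi, hj⟩ := deleteIncidenceSet_adj.1 hij
    rw [PGop_deleteIncidenceSet_of_leaf huv hleaf hIuv hi hj, hI i j hij]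
  · rintro ⟨hIuv, hIvu, hI⟩ i j hij
    rcases adj_cases_of_leaf hleaf hij with ⟨rfl, rfl⟩ | ⟨rfl, rfl⟩ | hij'
    · rw [hIuv, PGop_leaf hleaf]
    · exact hIvu
    · obtain ⟨-, hi, hj⟩ := deleteIncidenceSet_adj.1 hij'
      rw [hI i j hij', PGop_deleteIncidenceSet_of_leaf huv hleaf hIuv hi hj]

theorem IsMessageFixedPt.eqOn_of_leaf (huv : G.Adj u v) (hleaf : ∀ x, G.Adj u x → x = v)
    {w : V → ℕ} {I J : V → V → Bool} (hI : IsMessageFixedPt G w I)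
    (hJ : IsMessageFixedPt G w J) (h : ∀ i j, (G.deleteIncidenceSet u).Adj i j → I i j = J i j) :
    ∀ i j, G.Adj i j → I i j = J i j := by
  obtain ⟨hIuv, hIvu, -⟩ := (isMessageFixedPt_iff_of_leaf huv hleaf).1 hI
  obtain ⟨hJuv, hJvu, -⟩ := (isMessageFixedPt_iff_of_leaf huv hleaf).1 hJ
  intro i j hij
  rcases adj_cases_of_leaf hleaf hij with ⟨rfl, rfl⟩ | ⟨rfl, rfl⟩ | hij'
  · rw [hIuv, hJuv]
  · rw [hIvu, hJvu]
    exact PGop_congr fun x hx hxu => h x i (deleteIncidenceSet_adj.2 ⟨hx, hxu, huv.ne'⟩)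
  · exact h i j hij'

theorem exists_isMessageFixedPt_of_leaf (huv : G.Adj u v) (hleaf : ∀ x, G.Adj u x → x = v)
    {w : V → ℕ} {J : V → V → Bool}
    (hJ : IsMessageFixedPt (G.deleteIncidenceSet u) (leafReducedWeight w u v) J) :
    ∃ I, IsMessageFixedPt G w I := by
  let I : V → V → Bool := fun i j =>
    if (G.deleteIncidenceSet u).Adj i j then J i j else PGop G w J i j
  have hJI : ∀ i j, (G.deleteIncidenceSet u).Adj i j → J i j = I i j :=
    fun i j h => (if_pos h).symm
  have hIuv : I u v = decide (0 < w u) := by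
    simp [I, deleteIncidenceSet_adj, PGop_leaf hleaf]
  have hIvu : I v u = PGop G w J v u := if_neg (by simp [deleteIncidenceSet_adj])
  refine ⟨I, (isMessageFixedPt_iff_of_leaf huv hleaf).2 ⟨hIuv, ?_, hJ.congr hJI⟩⟩
  rw [hIvu]
  exact PGop_congr fun x hx hxu => hJI x v (deleteIncidenceSet_adj.2 ⟨hx, hxu, huv.ne'⟩)

end Leaf

section Counting

variable {G : SimpleGraph V} [DecidableRel G.Adj] {u v : V}

def vertexTerm (c d : ℕ) : ℕ := (if c + 1 ≤ d then c else 0) + min c d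

theorem vertexTerm_leaf_add (a b c : ℕ) :
    vertexTerm a (if c < b then 1 else 0) + vertexTerm b (c + if 0 < a then 1 else 0) =
      vertexTerm (b - if 0 < a then 1 else 0) c + 2 * if 0 < a ∧ 0 < b then 1 else 0 := by
  unfold vertexTerm
  split_ifs <;> omega

theorem inCount_eq_inCount_deleteIncidenceSet_add {i : V} (hi : i ≠ u) (I : V → V → Bool) :
    inCount G I i = inCount (G.deleteIncidenceSet u) I i + if G.Adj u i ∧ I u i then 1 else 0 := by
  rw [inCount, inCount, neighborFinset_deleteIncidenceSet_of_ne hi]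
  by_cases hui : G.Adj u i
  · rw [card_filter_eq_card_filter_erase_add ((G.mem_neighborFinset _ _).2 hui.symm)]
    simp [hui]
  · rw [erase_eq_of_notMem (by simpa using fun h => hui h.symm)]
    simp [hui]

theorem inCount_deleteIncidenceSet_self (I : V → V → Bool) :
    inCount (G.deleteIncidenceSet u) I u = 0 := by
  simp [inCount, neighborFinset_deleteIncidenceSet_self]

theorem sum_vertexTerm_of_leaf (huv : G.Adj u v) (hleaf : ∀ x, G.Adj u x → x = v)
    {w : V → ℕ} {I : V → V → Bool} (hI : IsMessageFixedPt G w I) :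
    ∑ i, vertexTerm (w i) (inCount G I i) =
      ∑ i, vertexTerm (leafReducedWeight w u v i) (inCount (G.deleteIncidenceSet u) I i) +
        2 * if 0 < w u ∧ 0 < w v then 1 else 0 := by
  obtain ⟨hIuv, hIvu, -⟩ := (isMessageFixedPt_iff_of_leaf huv hleaf).1 hI
  have hIu : inCount G I u = if I v u then 1 else 0 := by
    have : G.neighborFinset u = {v} := by
      ext x
      simpa using ⟨hleaf x, fun h => h ▸ huv⟩
    by_cases h : I v u <;> simp [inCount, this, filter_singleton, h]
  have hv : v ∈ univ.erase u := mem_erase.2 ⟨huv.ne', mem_univ v⟩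
  have hrest : ∑ i ∈ (univ.erase u).erase v, vertexTerm (w i) (inCount G I i) =
      ∑ i ∈ (univ.erase u).erase v,
        vertexTerm (leafReducedWeight w u v i) (inCount (G.deleteIncidenceSet u) I i) := by
    refine sum_congr rfl fun i hi => ?_
    obtain ⟨hiv, hiu⟩ : i ≠ v ∧ i ≠ u := by simpa using hi
    rw [inCount_eq_inCount_deleteIncidenceSet_add hiu, leafReducedWeight,
      Function.update_of_ne hiv, if_neg fun h => hiv (hleaf i h.1), add_zero]
  rw [← add_sum_erase _ _ (mem_univ u), ← add_sum_erase _ _ hv, ← add_sum_erase _ _ (mem_univ u),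
    ← add_sum_erase _ _ hv, hrest, hIu, hIvu, PGop_toward_leaf huv,
    inCount_eq_inCount_deleteIncidenceSet_add (G := G) huv.ne', hIuv, inCount_deleteIncidenceSet_self]
  simp only [leafReducedWeight, Function.update_self, Function.update_of_ne huv.ne,
    decide_eq_true_eq, huv, true_and]
  have hzero : vertexTerm (w u) 0 = 0 := by simp [vertexTerm]
  have := vertexTerm_leaf_add (w u) (w v) (inCount (G.deleteIncidenceSet u) I v)
  omega

end Counting

section Admissible

variable {G : SimpleGraph V} [DecidableRel G.Adj] {w : V → ℕ} {F : Finset (Sym2 V)}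

theorem mem_admFinset :
    F ∈ admFinset G w ↔ F ⊆ G.edgeFinset ∧ ∀ v, #(F.filter (v ∈ ·)) ≤ w v := by
  rw [admFinset, mem_filter, mem_powerset]

theorem card_le_MG (hF : F ∈ admFinset G w) : #F ≤ MG G w :=
  le_sup hF

theorem MG_le {m : ℕ} (h : ∀ F ∈ admFinset G w, #F ≤ m) : MG G w ≤ m :=
  Finset.sup_le h

variable (G w) in
theorem exists_mem_admFinset_MG_eq_card : ∃ F ∈ admFinset G w, MG G w = #F :=
  exists_mem_eq_sup _ ⟨∅, mem_admFinset.2 ⟨empty_subset _, by simp⟩⟩ _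

theorem admFinset_mono {G' : SimpleGraph V} [DecidableRel G'.Adj] {w' : V → ℕ} (hG : G' ≤ G)
    (hw : w' ≤ w) : admFinset G' w' ⊆ admFinset G w := fun F hF => by
  rw [mem_admFinset] at hF ⊢
  exact ⟨hF.1.trans (edgeFinset_mono hG), fun v => (hF.2 v).trans (hw v)⟩

theorem pos_of_mem_of_mem_admFinset (hF : F ∈ admFinset G w) {e : Sym2 V} (he : e ∈ F) {x : V}
    (hx : x ∈ e) : 0 < w x :=
  (card_pos.2 ⟨e, mem_filter.2 ⟨he, hx⟩⟩).trans_le ((mem_admFinset.1 hF).2 x)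

theorem insert_mem_admFinset (hF : F ∈ admFinset G w) {e : Sym2 V} (he : e ∈ G.edgeFinset)
    (hcap : ∀ x ∈ e, #(F.filter (x ∈ ·)) < w x) : insert e F ∈ admFinset G w := by
  rw [mem_admFinset] at hF ⊢
  refine ⟨insert_subset he hF.1, fun x => ?_⟩
  rw [filter_insert]
  split_ifs with hx
  · exact (card_insert_le _ _).trans (hcap x hx)
  · exact hF.2 x

theorem mem_admFinset_update_of_lt (hF : F ∈ admFinset G w) {v : V}
    (hv : #(F.filter (v ∈ ·)) < w v) : F ∈ admFinset G (Function.update w v (w v - 1)) := by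
  rw [mem_admFinset] at hF ⊢
  refine ⟨hF.1, fun x => ?_⟩
  rcases eq_or_ne x v with rfl | hx
  · rw [Function.update_self]
    omega
  · rw [Function.update_of_ne hx]
    exact hF.2 x

theorem erase_mem_admFinset_update (hF : F ∈ admFinset G w) {e : Sym2 V} (he : e ∈ F) {v : V}
    (hv : v ∈ e) : F.erase e ∈ admFinset G (Function.update w v (w v - 1)) := by
  have hsub : F.erase e ∈ admFinset G w := by
    rw [mem_admFinset] at hF ⊢
    exact ⟨(erase_subset e F).trans hF.1,
      fun x => (card_le_card (filter_subset_filter _ (erase_subset e F))).trans (hF.2 x)⟩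
  refine mem_admFinset_update_of_lt hsub ?_
  rw [filter_erase, card_erase_of_mem (mem_filter.2 ⟨he, hv⟩)]
  have := (mem_admFinset.1 hF).2 v
  have := pos_of_mem_of_mem_admFinset hF he hv
  omega

theorem mem_admFinset_deleteIncidenceSet (hF : F ∈ admFinset G w) {u : V}
    (hu : ∀ e ∈ F, u ∉ e) : F ∈ admFinset (G.deleteIncidenceSet u) w := by
  rw [mem_admFinset] at hF ⊢
  refine ⟨fun e he => ?_, hF.2⟩
  rw [edgeFinset_deleteIncidenceSet_eq_filter]
  exact mem_filter.2 ⟨hF.1 he, hu e he⟩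

theorem notMem_of_mem_admFinset_deleteIncidenceSet {u : V}
    (hF : F ∈ admFinset (G.deleteIncidenceSet u) w) {e : Sym2 V} (he : e ∈ F) : u ∉ e := by
  have := (mem_admFinset.1 hF).1 he
  rw [edgeFinset_deleteIncidenceSet_eq_filter] at this
  exact (mem_filter.1 this).2

end Admissible

section LeafMatching

variable {G : SimpleGraph V} [DecidableRel G.Adj] {w : V → ℕ} {u v : V}

theorem MG_deleteIncidenceSet_of_leaf (hleaf : ∀ x, G.Adj u x → x = v) (h0 : w u = 0 ∨ w v = 0) :
    MG (G.deleteIncidenceSet u) w = MG G w := by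
  refine le_antisymm (sup_mono (admFinset_mono (G.deleteIncidenceSet_le u) le_rfl))
    (MG_le fun F hF => card_le_MG (mem_admFinset_deleteIncidenceSet hF fun e he hue => ?_))
  have hmem := (mem_admFinset.1 hF).1 he
  rw [eq_of_mem_edgeSet_of_leaf hleaf (mem_edgeFinset.1 hmem) hue] at he
  have hwu := pos_of_mem_of_mem_admFinset hF he (Sym2.mem_mk_left u v)
  have hwv := pos_of_mem_of_mem_admFinset hF he (Sym2.mem_mk_right u v)
  omega

theorem MG_le_MG_deleteIncidenceSet_add_one_of_leaf (hleaf : ∀ x, G.Adj u x → x = v)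
    (hv : 0 < w v) : MG G w ≤ MG (G.deleteIncidenceSet u) (Function.update w v (w v - 1)) + 1 := by
  refine MG_le fun F hF => ?_
  have hleafF : ∀ e ∈ F, u ∈ e → e = s(u, v) := fun e he =>
    eq_of_mem_edgeSet_of_leaf hleaf (mem_edgeFinset.1 ((mem_admFinset.1 hF).1 he))
  suffices ∃ F' ∈ admFinset (G.deleteIncidenceSet u) (Function.update w v (w v - 1)),
      #F ≤ #F' + 1 by
    obtain ⟨F', hF', hcard⟩ := this
    exact hcard.trans (Nat.add_le_add_right (card_le_MG hF') 1)
  by_cases huvF : s(u, v) ∈ F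
  · refine ⟨F.erase s(u, v), mem_admFinset_deleteIncidenceSet
      (erase_mem_admFinset_update hF huvF (Sym2.mem_mk_right u v)) fun e he hue => ?_, ?_⟩
    · exact (mem_erase.1 he).1 (hleafF e (mem_of_mem_erase he) hue)
    · rw [card_erase_add_one huvF]
  have havoid : ∀ e ∈ F, u ∉ e := fun e he hue => huvF (hleafF e he hue ▸ he)
  by_cases hvF : ∃ e ∈ F, v ∈ e
  · obtain ⟨e, he, hve⟩ := hvF
    refine ⟨F.erase e, mem_admFinset_deleteIncidenceSet (erase_mem_admFinset_update hF he hve)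
      fun e' he' => havoid e' (mem_of_mem_erase he'), ?_⟩
    rw [card_erase_add_one he]
  · have hv0 : #(F.filter (v ∈ ·)) = 0 :=
      card_eq_zero.2 (filter_eq_empty_iff.2 fun e he hve => hvF ⟨e, he, hve⟩)
    exact ⟨F, mem_admFinset_deleteIncidenceSet (mem_admFinset_update_of_lt hF (by omega))
      havoid, Nat.le_succ _⟩

theorem MG_deleteIncidenceSet_add_one_le_of_leaf (huv : G.Adj u v) (hu : 0 < w u)
    (hv : 0 < w v) : MG (G.deleteIncidenceSet u) (Function.update w v (w v - 1)) + 1 ≤ MG G w := by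
  obtain ⟨F, hF, hcard⟩ := exists_mem_admFinset_MG_eq_card (G.deleteIncidenceSet u)
    (Function.update w v (w v - 1))
  have havoid : ∀ e ∈ F, u ∉ e := fun e he => notMem_of_mem_admFinset_deleteIncidenceSet hF he
  have hFG : F ∈ admFinset G w :=
    admFinset_mono (G.deleteIncidenceSet_le u) (update_le_self_iff.2 (Nat.sub_le _ _)) hF
  have hins : insert s(u, v) F ∈ admFinset G w := by
    refine insert_mem_admFinset hFG (mem_edgeFinset.2 huv) fun x hx => ?_
    rcases Sym2.mem_iff.1 hx with rfl | rfl
    · rwa [card_eq_zero.2 (filter_eq_empty_iff.2 havoid)]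
    · have := (mem_admFinset.1 hF).2 x
      rw [Function.update_self] at this
      omega
  rw [hcard, ← card_insert_of_notMem fun h => havoid _ h (Sym2.mem_mk_left u v)]
  exact card_le_MG hins

theorem MG_eq_MG_deleteIncidenceSet_add_of_leaf (huv : G.Adj u v)
    (hleaf : ∀ x, G.Adj u x → x = v) :
    MG G w = MG (G.deleteIncidenceSet u) (leafReducedWeight w u v) +
      if 0 < w u ∧ 0 < w v then 1 else 0 := by
  by_cases h : 0 < w u ∧ 0 < w v
  · rw [if_pos h, leafReducedWeight, if_pos h.1]
    exact le_antisymm (MG_le_MG_deleteIncidenceSet_add_one_of_leaf hleaf h.2)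
      (MG_deleteIncidenceSet_add_one_le_of_leaf huv h.1 h.2)
  · have hw : leafReducedWeight w u v = w := by
      rw [leafReducedWeight, Function.update_eq_self_iff]
      split_ifs <;> omega
    rw [if_neg h, hw, add_zero, MG_deleteIncidenceSet_of_leaf hleaf (by omega)]

end LeafMatching

namespace SimpleGraph.IsAcyclic

variable {G : SimpleGraph V} [DecidableRel G.Adj]

theorem eqOn_of_isMessageFixedPt (hG : G.IsAcyclic) {w : V → ℕ} {I J : V → V → Bool}
    (hI : IsMessageFixedPt G w I) (hJ : IsMessageFixedPt G w J) :
    ∀ i j, G.Adj i j → I i j = J i j := by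
  refine leaf_induction (P := fun G [DecidableRel G.Adj] => ∀ w I J, IsMessageFixedPt G w I →
    IsMessageFixedPt G w J → ∀ i j, G.Adj i j → I i j = J i j) ?_ ?_ G hG w I J hI hJ
  · exact fun G _ hE _ _ _ _ _ i j hij => (hE i j hij).elim
  · intro G _ u v huv hleaf ih w I J hI hJ
    exact hI.eqOn_of_leaf huv hleaf hJ (ih _ I J
      ((isMessageFixedPt_iff_of_leaf huv hleaf).1 hI).2.2
      ((isMessageFixedPt_iff_of_leaf huv hleaf).1 hJ).2.2)

theorem exists_isMessageFixedPt (hG : G.IsAcyclic) (w : V → ℕ) :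
    ∃ I, IsMessageFixedPt G w I := by
  refine leaf_induction (P := fun G [DecidableRel G.Adj] => ∀ w, ∃ I, IsMessageFixedPt G w I)
    ?_ ?_ G hG w
  · exact fun G _ hE _ => ⟨fun _ _ => false, fun i j hij => (hE i j hij).elim⟩
  · intro G _ u v huv hleaf ih w
    obtain ⟨J, hJ⟩ := ih (leafReducedWeight w u v)
    exact exists_isMessageFixedPt_of_leaf huv hleaf hJ

theorem two_mul_MG_eq_sum_vertexTerm (hG : G.IsAcyclic) {w : V → ℕ} {I : V → V → Bool}
    (hI : IsMessageFixedPt G w I) :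
    2 * MG G w = ∑ i, vertexTerm (w i) (inCount G I i) := by
  refine leaf_induction (P := fun G [DecidableRel G.Adj] => ∀ w I, IsMessageFixedPt G w I →
    2 * MG G w = ∑ i, vertexTerm (w i) (inCount G I i)) ?_ ?_ G hG w I hI
  · intro G _ hE w I _
    have hMG : MG G w = 0 := Nat.le_zero.1 <| MG_le fun F hF => by
      refine Nat.le_zero.2 (card_eq_zero.2 (eq_empty_iff_forall_notMem.2 fun e he => ?_))
      induction e using Sym2.ind with
      | _ a b => exact hE a b (mem_edgeFinset.1 ((mem_admFinset.1 hF).1 he))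
    have hN : ∀ i, G.neighborFinset i = ∅ := fun i => by
      ext x
      simp [hE]
    simp [hMG, inCount, vertexTerm, hN]
  · intro G _ u v huv hleaf ih w I hI
    rw [MG_eq_MG_deleteIncidenceSet_add_of_leaf huv hleaf, sum_vertexTerm_of_leaf huv hleaf hI,
      mul_add, ih _ I ((isMessageFixedPt_iff_of_leaf huv hleaf).1 hI).2.2]

end SimpleGraph.IsAcyclic

/-- On a finite acyclic graph there is a unique solution (on oriented edges) of
`I = P_G(I)`, and `2·M(G) = Σ_v ( w_v·1(Σ_{e∈∂v} I_e ≥ w_v+1) + min(w_v, Σ_{e∈∂v} I_e) )`. -/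
theorem statement_11 (G : SimpleGraph V) [DecidableRel G.Adj] (hG : G.IsAcyclic)
    (w : V → ℕ) :
    ∃ I : V → V → Bool,
      (∀ i j, G.Adj i j → I i j = PGop G w I i j) ∧
      (∀ I' : V → V → Bool,
        (∀ i j, G.Adj i j → I' i j = PGop G w I' i j) →
        ∀ i j, G.Adj i j → I' i j = I i j) ∧
      2 * MG G w = ∑ v : V,
        ((if w v + 1 ≤ ((G.neighborFinset v).filter fun x => I x v = true).card
            then w v else 0)
          + min (w v) ((G.neighborFinset v).filter fun x => I x v = true).card) := by
  obtain ⟨I, hI⟩ := hG.exists_isMessageFixedPt w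
  exact ⟨I, hI, fun I' hI' => hG.eqOn_of_isMessageFixedPt hI' hI,
    hG.two_mul_MG_eq_sum_vertexTerm hI⟩
end

section
/- Let G = (V,E) be a finite simple graph with degree constraints w = (w_v)_{v∈V}. Then for every s > 1, M(G) ≤ s·P'_G(s)/P_G(s) + |E|·(log 2)/(log s). -/
open scoped Classical

variable {V : Type*} [Fintype V] [DecidableEq V]

/-- The partition function `P_G(z) = Σ_{F admissible} z^{|F|}`. -/
noncomputable def PGz (G : SimpleGraph V) [DecidableRel G.Adj] (w : V → ℕ)
    (z : ℝ) : ℝ :=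
  ∑ F ∈ admFinset G w, z ^ F.card

/-! Consider the Gibbs distribution `p_F = s^{|F|} / P_G(s)` on admissible subgraphs. Its
entropy `log P_G(s) - (s P'_G(s) / P_G(s)) log s` is at most the log of the number of
admissible subgraphs, hence at most `|E| log 2`, while `P_G(s) ≥ s^{M(G)}` because the
largest admissible subgraph alone contributes `s^{M(G)}`. -/

open Finset Real

/-- Entropy of the distribution `x / ∑ x` is at most `log #A`: Jensen for `log`. -/
theorem sum_mul_log_sum_div_le_mul_log_card {ι : Type*} (A : Finset ι) (x : ι → ℝ)
    (hx : ∀ i ∈ A, 0 < x i) :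
    ∑ i ∈ A, x i * log ((∑ j ∈ A, x j) / x i) ≤ (∑ j ∈ A, x j) * log #A := by
  rcases A.eq_empty_or_nonempty with rfl | hA
  · simp
  set X := ∑ j ∈ A, x j
  have hX : 0 < X := sum_pos hx hA
  have jensen : ∑ i ∈ A, (x i / X) • log (X / x i) ≤ log (∑ i ∈ A, (x i / X) • (X / x i)) :=
    strictConcaveOn_log_Ioi.concaveOn.le_map_sum (fun i hi => (div_pos (hx i hi) hX).le)
      (by rw [← sum_div, div_self hX.ne']) (fun i hi => div_pos hX (hx i hi))
  have hweights : ∑ i ∈ A, (x i / X) • (X / x i) = #A := by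
    rw [card_eq_sum_ones, Nat.cast_sum, Nat.cast_one]
    exact sum_congr rfl fun i hi => by
      rw [smul_eq_mul, div_mul_div_comm, mul_comm, div_self (mul_pos hX (hx i hi)).ne']
  rw [hweights] at jensen
  calc ∑ i ∈ A, x i * log (X / x i) = X * ∑ i ∈ A, (x i / X) • log (X / x i) := by
        rw [mul_sum]
        exact sum_congr rfl fun i _ => by rw [smul_eq_mul]; field_simp
    _ ≤ X * log #A := by gcongr

section

variable (G : SimpleGraph V) [DecidableRel G.Adj] (w : V → ℕ)

theorem empty_mem_admFinset : ∅ ∈ admFinset G w := by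
  simp [admFinset]

theorem card_admFinset_le : #(admFinset G w) ≤ 2 ^ #G.edgeFinset :=
  card_powerset G.edgeFinset ▸ card_le_card (filter_subset _ _)

theorem PGz_pos {s : ℝ} (hs : 0 < s) : 0 < PGz G w s :=
  sum_pos (fun _ _ => pow_pos hs _) ⟨∅, empty_mem_admFinset G w⟩

theorem pow_MG_le_PGz {s : ℝ} (hs : 0 ≤ s) : s ^ MG G w ≤ PGz G w s := by
  obtain ⟨F, hF, hFcard⟩ := exists_mem_eq_sup _ ⟨∅, empty_mem_admFinset G w⟩ Finset.card
  rw [MG, hFcard]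
  exact single_le_sum (f := fun F : Finset (Sym2 V) => s ^ #F) (fun _ _ => pow_nonneg hs _) hF

theorem mul_deriv_PGz (s : ℝ) :
    s * deriv (PGz G w) s = ∑ F ∈ admFinset G w, (#F : ℝ) * s ^ #F := by
  have hderiv : HasDerivAt (PGz G w) (∑ F ∈ admFinset G w, (#F : ℝ) * s ^ (#F - 1)) s :=
    HasDerivAt.fun_sum fun F _ => hasDerivAt_pow #F s
  rw [hderiv.deriv, mul_sum]
  refine sum_congr rfl fun F _ => ?_
  rcases Nat.eq_zero_or_pos #F with h | h
  · simp [h]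
  · rw [mul_left_comm, ← pow_succ', Nat.sub_add_cancel h]

theorem PGz_mul_log_PGz_sub_le {s : ℝ} (hs : 0 < s) :
    PGz G w s * log (PGz G w s) - s * deriv (PGz G w) s * log s
      ≤ PGz G w s * (#G.edgeFinset * log 2) := by
  have gibbs := sum_mul_log_sum_div_le_mul_log_card (admFinset G w) (fun F => s ^ #F)
    fun _ _ => pow_pos hs _
  have hlog : ∀ F : Finset (Sym2 V), log (PGz G w s / s ^ #F) = log (PGz G w s) - #F * log s :=
    fun F => by rw [log_div (PGz_pos G w hs).ne' (pow_pos hs _).ne', log_pow]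
  have hcard : log #(admFinset G w) ≤ #G.edgeFinset * log 2 := by
    rw [← log_pow]
    exact log_le_log (by exact_mod_cast card_pos.mpr ⟨∅, empty_mem_admFinset G w⟩)
      (by exact_mod_cast card_admFinset_le G w)
  calc PGz G w s * log (PGz G w s) - s * deriv (PGz G w) s * log s
      = ∑ F ∈ admFinset G w, s ^ #F * log (PGz G w s / s ^ #F) := by
        simp only [hlog, mul_sub, sum_sub_distrib, ← sum_mul, mul_deriv_PGz]
        rw [sum_mul]
        exact congrArg _ (sum_congr rfl fun F _ => by ring)
    _ ≤ PGz G w s * log #(admFinset G w) := gibbs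
    _ ≤ PGz G w s * (#G.edgeFinset * log 2) := by gcongr; exact (PGz_pos G w hs).le

end

/-- For every `s > 1`, `M(G) ≤ s·P'_G(s)/P_G(s) + |E|·log 2/log s`. -/
theorem statement_15 (G : SimpleGraph V) [DecidableRel G.Adj] (w : V → ℕ)
    (s : ℝ) (hs : 1 < s) :
    (MG G w : ℝ) ≤ s * deriv (PGz G w) s / PGz G w s
      + G.edgeFinset.card * Real.log 2 / Real.log s := by
  have hs0 : 0 < s := zero_lt_one.trans hs
  have hP := PGz_pos G w hs0
  have hlogs : 0 < log s := log_pos hs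
  have hM : MG G w * log s ≤ log (PGz G w s) := by
    rw [← log_pow]; exact log_le_log (pow_pos hs0 _) (pow_MG_le_PGz G w hs0.le)
  have hPM := mul_le_mul_of_nonneg_left hM hP.le
  have hentropy := PGz_mul_log_PGz_sub_le G w hs0
  rw [div_add_div _ _ hP.ne' hlogs.ne', le_div_iff₀ (mul_pos hP hlogs)]
  linarith
end

section
/- Let h > ℓ ≥ 1 and k ≥ 1 be integers and c > 0. Define g^A(x) = P(Bin(h−1,x) < ℓ) = Σ_{j=0}^{ℓ−1} C(h−1,j) x^j (1−x)^{h−1−j}, g^B(q) = 1 − Q(chq, k), h^B(q) = ch·e^{−chq}(chq)^{k−1}/(k−1)!, and F(q) = E[min(ℓ, Bin(h, g^B(q)))] + k·Q(chq, k+1)/c for q ∈ [0,1]. Then F is differentiable on (0,1) and F'(q) = h · h^B(q) · ( q − g^A(g^B(q)) ). -/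
/-! Differentiating `E[f(Bin(n,p))]` in `p` gives `n · E[f(Bin(n-1,p)+1) - f(Bin(n-1,p))]`: this is
the derivative formula for Bernstein polynomials followed by a summation by parts. For `f = min ℓ`
the increment is the indicator of `j < ℓ`, so the first summand of `F` has derivative
`h · g^A(g^B(q)) · (g^B)'(q)`. Since `∂ₓ Q(x, k + 1) = e^{-x} x^k / k!`, we get `(g^B)' = -h^B`, and
the Poisson term `k Q(chq, k+1) / c` has derivative `h · h^B(q) · q`. -/

/-- `Q x y = e^{-x} ∑_{j ≥ y} x^j / j!`. -/
noncomputable def Q (x : ℝ) (y : ℕ) : ℝ :=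
  Real.exp (-x) * ∑' j : ℕ, if y ≤ j then x ^ j / (Nat.factorial j : ℝ) else 0

/-- `P(Bin(n,p) = j)`. -/
noncomputable def binomPMF (n j : ℕ) (p : ℝ) : ℝ :=
  (n.choose j : ℝ) * p ^ j * (1 - p) ^ (n - j)

/-- `g^A(x) = P(Bin(h−1,x) < ℓ)`. -/
noncomputable def gA (h ℓ : ℕ) (x : ℝ) : ℝ :=
  ∑ j ∈ Finset.range ℓ, binomPMF (h - 1) j x

/-- `g^B(q) = 1 − Q(chq, k)`. -/
noncomputable def gB (h k : ℕ) (c q : ℝ) : ℝ := 1 - Q (c * h * q) k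

/-- `h^B(q) = ch·e^{−chq}·(chq)^{k−1}/(k−1)!`. -/
noncomputable def hB (h k : ℕ) (c q : ℝ) : ℝ :=
  c * h * Real.exp (-(c * h * q)) * (c * h * q) ^ (k - 1) / (Nat.factorial (k - 1) : ℝ)

/-- `F(q) = E[min(ℓ, Bin(h, g^B(q)))] + k·Q(chq, k+1)/c`. -/
noncomputable def Fcal (h ℓ k : ℕ) (c q : ℝ) : ℝ :=
  (∑ j ∈ Finset.range (h + 1), binomPMF h j (gB h k c q) * min (ℓ : ℝ) (j : ℝ))
    + k * Q (c * h * q) (k + 1) / c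

open Finset

lemma Q_eq_one_sub (x : ℝ) (n : ℕ) :
    Q x n = 1 - Real.exp (-x) * ∑ j ∈ range n, x ^ j / (j.factorial : ℝ) := by
  have hexp : HasSum (fun j : ℕ => x ^ j / (j.factorial : ℝ)) (Real.exp x) := by
    rw [Real.exp_eq_exp_ℝ]
    exact NormedSpace.expSeries_div_hasSum_exp x
  have hhead : HasSum (fun j : ℕ => if j < n then x ^ j / (j.factorial : ℝ) else 0)
      (∑ j ∈ range n, if j < n then x ^ j / (j.factorial : ℝ) else 0) :=
    hasSum_sum_of_ne_finset_zero fun j hj => if_neg (by simpa using hj)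
  rw [sum_congr rfl fun j hj => if_pos (mem_range.mp hj)] at hhead
  have htail : (∑' j : ℕ, if n ≤ j then x ^ j / (j.factorial : ℝ) else 0)
      = Real.exp x - ∑ j ∈ range n, x ^ j / (j.factorial : ℝ) := by
    refine ((hexp.sub hhead).congr_fun fun j => ?_).tsum_eq
    by_cases hj : n ≤ j <;> simp [hj, not_lt.mpr, not_le.mp]
  rw [Q, htail, mul_sub, ← Real.exp_add, neg_add_cancel, Real.exp_zero]

lemma hasDerivAt_sum_range_succ_pow_div_factorial (n : ℕ) (x : ℝ) :
    HasDerivAt (fun x : ℝ => ∑ j ∈ range (n + 1), x ^ j / (j.factorial : ℝ))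
      (∑ j ∈ range n, x ^ j / (j.factorial : ℝ)) x := by
  have hsum := HasDerivAt.fun_sum (u := range (n + 1)) fun j _ =>
    (hasDerivAt_pow j x).div_const (j.factorial : ℝ)
  refine hsum.congr_deriv ?_
  rw [sum_range_succ']
  simp only [Nat.cast_zero, zero_mul, zero_div, add_zero]
  refine sum_congr rfl fun j _ => ?_
  rw [Nat.add_sub_cancel, Nat.factorial_succ, Nat.cast_mul]
  field_simp

lemma hasDerivAt_Q_succ (n : ℕ) (x : ℝ) :
    HasDerivAt (fun x => Q x (n + 1)) (Real.exp (-x) * x ^ n / (n.factorial : ℝ)) x := by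
  have hexp : HasDerivAt (fun x : ℝ => Real.exp (-x)) (-Real.exp (-x)) x := by
    simpa using (hasDerivAt_neg x).exp
  simp_rw [Q_eq_one_sub]
  refine ((hexp.mul (hasDerivAt_sum_range_succ_pow_div_factorial n x)).const_sub 1).congr_deriv ?_
  rw [sum_range_succ]
  ring

lemma hasDerivAt_Q_mul_succ (a : ℝ) (n : ℕ) (q : ℝ) :
    HasDerivAt (fun q => Q (a * q) (n + 1))
      (a * Real.exp (-(a * q)) * (a * q) ^ n / (n.factorial : ℝ)) q := by
  refine ((hasDerivAt_Q_succ n (a * q)).comp q ((hasDerivAt_id q).const_mul a)).congr_deriv ?_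
  simp only [mul_one]
  ring

lemma binomPMF_eq_eval_bernsteinPolynomial (n j : ℕ) :
    binomPMF n j = fun p => (bernsteinPolynomial ℝ n j).eval p := by
  ext p
  simp [binomPMF, bernsteinPolynomial]

lemma binomPMF_eq_zero_of_lt {n j : ℕ} (h : n < j) (p : ℝ) : binomPMF n j p = 0 := by
  simp [binomPMF, Nat.choose_eq_zero_of_lt h]

lemma hasDerivAt_binomPMF_zero (n : ℕ) (p : ℝ) :
    HasDerivAt (binomPMF n 0) (-n * binomPMF (n - 1) 0 p) p := by
  simpa [binomPMF_eq_eval_bernsteinPolynomial, bernsteinPolynomial.derivative_zero] using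
    (bernsteinPolynomial ℝ n 0).hasDerivAt p

lemma hasDerivAt_binomPMF_succ (n j : ℕ) (p : ℝ) :
    HasDerivAt (binomPMF n (j + 1))
      (n * (binomPMF (n - 1) j p - binomPMF (n - 1) (j + 1) p)) p := by
  simpa [binomPMF_eq_eval_bernsteinPolynomial, bernsteinPolynomial.derivative_succ] using
    (bernsteinPolynomial ℝ n (j + 1)).hasDerivAt p

lemma hasDerivAt_sum_binomPMF_mul (n : ℕ) (f : ℕ → ℝ) (p : ℝ) :
    HasDerivAt (fun p => ∑ j ∈ range (n + 1), binomPMF n j p * f j)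
      (n * ∑ j ∈ range n, binomPMF (n - 1) j p * (f (j + 1) - f j)) p := by
  set b := fun j => binomPMF (n - 1) j p
  have hsplit : (fun p => ∑ j ∈ range (n + 1), binomPMF n j p * f j)
      = fun p => ∑ j ∈ range n, binomPMF n (j + 1) p * f (j + 1) + binomPMF n 0 p * f 0 :=
    funext fun p => sum_range_succ' _ _
  have hshift : ∑ j ∈ range n, b (j + 1) * f (j + 1) + b 0 * f 0
      = ∑ j ∈ range n, b j * f j + b n * f n := by
    rw [← sum_range_succ' (fun j => b j * f j), sum_range_succ]
  have hlast : (n : ℝ) * b n = 0 := by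
    rcases n with _ | m
    · simp
    · simp [b, binomPMF_eq_zero_of_lt (Nat.lt_succ_self m)]
  rw [hsplit]
  refine ((HasDerivAt.fun_sum fun j _ => (hasDerivAt_binomPMF_succ n j p).mul_const (f (j + 1))).add
    ((hasDerivAt_binomPMF_zero n p).mul_const (f 0))).congr_deriv ?_
  simp only [mul_sub, sub_mul, sum_sub_distrib, ← mul_sum, mul_assoc]
  linear_combination (-(n : ℝ)) * hshift - f n * hlast

lemma min_natCast_succ_sub_min (ℓ j : ℕ) :
    min (ℓ : ℝ) ((j + 1 : ℕ) : ℝ) - min (ℓ : ℝ) (j : ℝ) = if j < ℓ then 1 else 0 := by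
  split_ifs with hj
  · rw [min_eq_right (by exact_mod_cast hj), min_eq_right (by exact_mod_cast hj.le)]
    push_cast
    ring
  · push Not at hj
    rw [min_eq_left (by exact_mod_cast hj.trans j.le_succ), min_eq_left (by exact_mod_cast hj),
      sub_self]

lemma sum_binomPMF_mul_min_succ_sub_min (m ℓ : ℕ) (p : ℝ) :
    ∑ j ∈ range (m + 1), binomPMF m j p * (min (ℓ : ℝ) ((j + 1 : ℕ) : ℝ) - min (ℓ : ℝ) (j : ℝ))
      = ∑ j ∈ range ℓ, binomPMF m j p := by
  simp_rw [min_natCast_succ_sub_min, mul_ite, mul_one, mul_zero]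
  rw [← sum_filter, ← sum_filter_of_ne (s := range ℓ) fun j _ hj =>
    not_lt.mp fun hmj => hj (binomPMF_eq_zero_of_lt hmj p)]
  congr 1
  ext j
  simp only [mem_filter, mem_range]
  omega

lemma hasDerivAt_sum_binomPMF_mul_min (n ℓ : ℕ) (p : ℝ) :
    HasDerivAt (fun p => ∑ j ∈ range (n + 1), binomPMF n j p * min (ℓ : ℝ) (j : ℝ))
      (n * gA n ℓ p) p := by
  refine (hasDerivAt_sum_binomPMF_mul n (fun j => min (ℓ : ℝ) (j : ℝ)) p).congr_deriv ?_
  rcases n with _ | m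
  · simp
  · simp only [gA, Nat.add_sub_cancel, sum_binomPMF_mul_min_succ_sub_min]

lemma hasDerivAt_gB_succ (h n : ℕ) (c q : ℝ) :
    HasDerivAt (gB h (n + 1) c) (-hB h (n + 1) c q) q := by
  refine ((hasDerivAt_Q_mul_succ (c * h) n q).const_sub 1).congr_deriv ?_
  simp only [hB, Nat.add_sub_cancel]

lemma hasDerivAt_natCast_mul_Q_div (h n : ℕ) {c : ℝ} (hc : c ≠ 0) (q : ℝ) :
    HasDerivAt (fun q => ((n + 1 : ℕ) : ℝ) * Q (c * h * q) (n + 1 + 1) / c)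
      (h * hB h (n + 1) c q * q) q := by
  refine (((hasDerivAt_Q_mul_succ (c * h) (n + 1) q).const_mul _).div_const c).congr_deriv ?_
  simp only [hB, Nat.add_sub_cancel, Nat.factorial_succ, Nat.cast_mul, pow_succ]
  field_simp

theorem statement_18_general (h ℓ k : ℕ) (hk1 : 1 ≤ k)
    (c : ℝ) (hc : 0 < c) :
    ∀ q ∈ Set.Ioo (0 : ℝ) 1,
      HasDerivAt (fun q' : ℝ => Fcal h ℓ k c q')
        ((h : ℝ) * hB h k c q * (q - gA h ℓ (gB h k c q))) q := by
  intro q _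
  obtain ⟨n, rfl⟩ := Nat.exists_eq_add_of_le' hk1
  have hmin := (hasDerivAt_sum_binomPMF_mul_min h ℓ (gB h (n + 1) c q)).comp q
    (hasDerivAt_gB_succ h n c q)
  refine (hmin.add (hasDerivAt_natCast_mul_Q_div h n hc.ne' q)).congr_deriv ?_
  ring

/-- `F` is differentiable on `(0,1)` with `F'(q) = h·h^B(q)·(q − g^A(g^B(q)))`. -/
theorem statement_18 (h ℓ k : ℕ) (hℓ1 : 1 ≤ ℓ) (hℓh : ℓ < h) (hk1 : 1 ≤ k)
    (c : ℝ) (hc : 0 < c) :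
    ∀ q ∈ Set.Ioo (0 : ℝ) 1,
      HasDerivAt (fun q' : ℝ => Fcal h ℓ k c q')
        ((h : ℝ) * hB h k c q * (q - gA h ℓ (gB h k c q))) q :=
  statement_18_general h ℓ k hk1 c hc
end
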